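/- arXiv:2202.08035 — 8 statements merged into one kernel-verified Lean document; each statement's English description precedes it below -/
import Mathlib

section
/- Let μ_1, …, μ_n be probability measures on [0,1], let b^1, …, b^k ∈ [0,1]^n, and let μ = ∏_{i=1}^n μ_i. For x ∈ [0,1]^n and i ∈ [n] define J^i(x) := { j ∈ [k] : x_1 ≤ b^j_1, …, x_i ≤ b^j_i }. Then for every J ⊆ [k] and every i ∈ {2, …, n}: μ({ x ∈ [0,1]^n : J^i(x) = J }) = Σ_{J ⊆ L ⊆ [k]} μ({ x ∈ [0,1]^n : J^{i−1}(x) = L }) · μ_i((α_L, β_L] ∩ [0,1]), where α_L = max_{j ∈ L \ J} b^j_i and β_L = min_{j ∈ J} b^j_i, with the conventions max ∅ = −∞ and min ∅ = +∞. -/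
open MeasureTheory

theorem helper_single {n : ℕ} (μ : Fin n → Measure ℝ) [∀ i, SigmaFinite (μ i)]
    (i0 : Fin n) {inst : Fintype {j : Fin n // j = i0}} (C : Set ℝ) :
    @Measure.pi _ _ inst _ (fun i : {j : Fin n // j = i0} => μ ↑i)
      ((fun f : {j : Fin n // j = i0} → ℝ => f ⟨i0, rfl⟩) ⁻¹' C) = μ i0 C := by
  rw [Subsingleton.elim inst (by infer_instance)]
  have hC'eq : ((fun f : {j : Fin n // j = i0} → ℝ => f ⟨i0, rfl⟩) ⁻¹' C)
      = Set.pi Set.univ (fun _ : {j : Fin n // j = i0} => C) := by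
    ext f
    constructor
    · intro hf j _
      have : j = (⟨i0, rfl⟩ : {j : Fin n // j = i0}) := Subtype.ext j.2
      rw [this]; exact hf
    · intro hf
      exact hf ⟨i0, rfl⟩ (Set.mem_univ _)
  rw [hC'eq, Measure.pi_pi]
  exact Finset.prod_eq_single (⟨i0, rfl⟩ : {j : Fin n // j = i0})
    (fun j _ hj => absurd (Subtype.ext j.2) hj)
    (fun h => absurd (Finset.mem_univ _) h)

theorem helper_univ {n : ℕ} (μ : Fin n → Measure ℝ) [∀ i, IsProbabilityMeasure (μ i)]
    (i0 : Fin n) {inst : Fintype {j : Fin n // j = i0}} :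
    @Measure.pi _ _ inst _ (fun i : {j : Fin n // j = i0} => μ ↑i) Set.univ = 1 := by
  rw [Subsingleton.elim inst (by infer_instance)]
  exact measure_univ

theorem aux_pi_eval {n : ℕ} (μ : Fin n → Measure ℝ) [∀ i, IsProbabilityMeasure (μ i)]
    (i0 : Fin n) (A : Set (Fin n → ℝ)) (hA : MeasurableSet A)
    (hA' : ∀ x y : Fin n → ℝ, (∀ j, j ≠ i0 → x j = y j) → x ∈ A → y ∈ A)
    (C : Set ℝ) (hC : MeasurableSet C) :
    Measure.pi μ (A ∩ (fun x => x i0) ⁻¹' C) = Measure.pi μ A * μ i0 C := by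
  classical
  set e := MeasurableEquiv.piEquivPiSubtypeProd (fun _ : Fin n => ℝ) (fun j => j = i0) with he
  have mp := measurePreserving_piEquivPiSubtypeProd μ (fun j : Fin n => j = i0)
  have hmA' : MeasurableSet ((fun g : {j : Fin n // ¬ j = i0} → ℝ =>
      e.symm ((fun _ => (0:ℝ)), g)) ⁻¹' A) :=
    hA.preimage (e.symm.measurable.comp (measurable_const.prodMk measurable_id))
  have hmC' : MeasurableSet ((fun f : {j : Fin n // j = i0} → ℝ => f ⟨i0, rfl⟩) ⁻¹' C) :=
    hC.preimage (measurable_pi_apply _)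
  have hsymm : ∀ (f : {j : Fin n // j = i0} → ℝ) (g : {j : Fin n // ¬ j = i0} → ℝ) (j : Fin n),
      e.symm (f, g) j = if h : j = i0 then f ⟨j, h⟩ else g ⟨j, h⟩ := by
    intro f g j; rfl
  have happly : ∀ (x : Fin n → ℝ),
      e x = (fun j : {j : Fin n // j = i0} => x ↑j, fun j : {j : Fin n // ¬ j = i0} => x ↑j) := by
    intro x; rfl
  have hAmem : ∀ (x : Fin n → ℝ),
      ((fun j : {j : Fin n // ¬ j = i0} => x ↑j) ∈ (fun g : {j : Fin n // ¬ j = i0} → ℝ =>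
        e.symm ((fun _ => (0:ℝ)), g)) ⁻¹' A ↔ x ∈ A) := by
    intro x
    constructor
    · intro hx
      refine hA' _ _ ?_ hx
      intro j hj
      simp only [hsymm, dif_neg hj]
    · intro hx
      refine hA' _ _ ?_ hx
      intro j hj
      simp only [hsymm, dif_neg hj]
  have key1 : e ⁻¹' (((fun f : {j : Fin n // j = i0} → ℝ => f ⟨i0, rfl⟩) ⁻¹' C) ×ˢ
      ((fun g : {j : Fin n // ¬ j = i0} → ℝ => e.symm ((fun _ => (0:ℝ)), g)) ⁻¹' A))
      = A ∩ (fun x => x i0) ⁻¹' C := by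
    ext x
    have h := hAmem x
    simp only [Set.mem_preimage] at h
    simp only [Set.mem_preimage, happly, Set.mem_prod, Set.mem_inter_iff, h]
    tauto
  have key2 : e ⁻¹' ((Set.univ : Set ({j : Fin n // j = i0} → ℝ)) ×ˢ
      ((fun g : {j : Fin n // ¬ j = i0} → ℝ => e.symm ((fun _ => (0:ℝ)), g)) ⁻¹' A)) = A := by
    ext x
    have h := hAmem x
    simp only [Set.mem_preimage] at h
    simp only [Set.mem_preimage, happly, Set.mem_prod, Set.mem_univ, true_and, h]
  have h2 : (Measure.pi fun i : {j : Fin n // ¬ j = i0} => μ ↑i)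
      ((fun g : {j : Fin n // ¬ j = i0} → ℝ => e.symm ((fun _ => (0:ℝ)), g)) ⁻¹' A)
      = Measure.pi μ A := by
    conv_rhs => rw [← key2]
    rw [mp.measure_preimage (MeasurableSet.univ.prod hmA').nullMeasurableSet,
      Measure.prod_prod, helper_univ μ i0, one_mul]
  rw [← key1, mp.measure_preimage (hmC'.prod hmA').nullMeasurableSet,
    Measure.prod_prod, helper_single μ i0 C, h2, mul_comm]

theorem core_iff {k : ℕ} (J L₀ : Finset (Fin k)) (c : Fin k → ℝ) (t : ℝ) :
    (∀ j, (j ∈ L₀ ∧ t ≤ c j ↔ j ∈ J)) ↔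
      (J ⊆ L₀ ∧ ((L₀ \ J).sup fun j => ((c j : ℝ) : EReal)) < (t:EReal) ∧
        (t:EReal) ≤ J.inf fun j => ((c j : ℝ) : EReal)) := by
  constructor
  · intro h
    refine ⟨fun j hj => ((h j).mpr hj).1, ?_, ?_⟩
    · rw [Finset.sup_lt_iff (EReal.bot_lt_coe t)]
      intro j hj
      rw [Finset.mem_sdiff] at hj
      have := fun hle => hj.2 ((h j).mp ⟨hj.1, hle⟩)
      exact EReal.coe_lt_coe_iff.mpr (lt_of_not_ge this)
    · exact Finset.le_inf fun j hj => EReal.coe_le_coe_iff.mpr ((h j).mpr hj).2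
  · rintro ⟨hJL, hsup, hinf⟩ j
    constructor
    · rintro ⟨hjL, hle⟩
      by_contra hjJ
      have h1 := Finset.le_sup (f := fun j => ((c j : ℝ) : EReal)) (Finset.mem_sdiff.mpr ⟨hjL, hjJ⟩)
      have := lt_of_le_of_lt h1 hsup
      exact absurd hle (not_le.mpr (EReal.coe_lt_coe_iff.mp this))
    · intro hjJ
      refine ⟨hJL hjJ, ?_⟩
      have := le_trans hinf (Finset.inf_le hjJ)
      exact EReal.coe_le_coe_iff.mp this

theorem stmt2 {n k : ℕ}
    (μ : Fin n → Measure ℝ) [∀ i, IsProbabilityMeasure (μ i)]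
    (hμ : ∀ i, μ i (Set.Icc 0 1) = 1)
    (b : Fin k → Fin n → ℝ) (hb : ∀ j i, b j i ∈ Set.Icc (0:ℝ) 1)
    (J : Finset (Fin k)) (i : ℕ) (h2 : 2 ≤ i) (hin : i ≤ n) :
    Measure.pi μ {x | {j | ∀ l : Fin n, (l : ℕ) < i → x l ≤ b j l} = ↑J} =
      ∑ L ∈ (Finset.univ : Finset (Fin k)).powerset.filter (fun L => J ⊆ L),
        Measure.pi μ {x | {j | ∀ l : Fin n, (l : ℕ) < i - 1 → x l ≤ b j l} = ↑L} *
          μ ⟨i - 1, by omega⟩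
            ({t : ℝ |
                (L \ J).sup (fun j => ((b j ⟨i - 1, by omega⟩ : ℝ) : EReal)) < (t : EReal) ∧
                (t : EReal) ≤ J.inf (fun j => ((b j ⟨i - 1, by omega⟩ : ℝ) : EReal))} ∩
              Set.Icc 0 1) := by
  classical
  have hmn : i - 1 < n := by omega
  let idx : Fin n := ⟨i - 1, hmn⟩
  let AL : Finset (Fin k) → Set (Fin n → ℝ) :=
    fun L => {x | {j | ∀ l : Fin n, (l : ℕ) < i - 1 → x l ≤ b j l} = ↑L}
  let CL : Finset (Fin k) → Set ℝ :=
    fun L => {t : ℝ | ((L \ J).sup fun j => ((b j idx : ℝ) : EReal)) < (t : EReal) ∧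
        (t : EReal) ≤ J.inf fun j => ((b j idx : ℝ) : EReal)}
  let F := (Finset.univ : Finset (Fin k)).powerset.filter (fun L => J ⊆ L)
  let D : Finset (Fin k) → Set (Fin n → ℝ) := fun L => AL L ∩ (fun x => x idx) ⁻¹' CL L
  let L₀ : (Fin n → ℝ) → Finset (Fin k) :=
    fun x => Finset.univ.filter (fun j => ∀ l : Fin n, (l : ℕ) < i - 1 → x l ≤ b j l)
  have hmemL₀ : ∀ x j, (j ∈ L₀ x ↔ ∀ l : Fin n, (l : ℕ) < i - 1 → x l ≤ b j l) := by
    intro x j; simp [L₀]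
  have hALmem : ∀ (L) (x : Fin n → ℝ),
      x ∈ AL L ↔ ∀ j, ((∀ l : Fin n, (l : ℕ) < i - 1 → x l ≤ b j l) ↔ j ∈ L) := by
    intro L x
    simp only [AL, Set.mem_setOf_eq, Set.ext_iff, Finset.mem_coe]
  have hx_AL : ∀ x L, x ∈ AL L ↔ L = L₀ x := by
    intro x L
    rw [hALmem]
    constructor
    · intro h
      ext j
      rw [hmemL₀]
      exact (h j).symm
    · rintro rfl j
      rw [hmemL₀]
  -- measurability
  have hPmeas : ∀ j : Fin k,
      MeasurableSet {x : Fin n → ℝ | ∀ l : Fin n, (l : ℕ) < i - 1 → x l ≤ b j l} := by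
    intro j
    have : {x : Fin n → ℝ | ∀ l : Fin n, (l : ℕ) < i - 1 → x l ≤ b j l}
        = ⋂ l : Fin n, ⋂ (_ : (l : ℕ) < i - 1), {x : Fin n → ℝ | x l ≤ b j l} := by
      ext x; simp only [Set.mem_iInter, Set.mem_setOf_eq]
    rw [this]
    exact MeasurableSet.iInter fun l => MeasurableSet.iInter fun _ =>
      measurableSet_le (measurable_pi_apply l) measurable_const
  have hALmeas : ∀ L, MeasurableSet (AL L) := by
    intro L
    have : AL L = ⋂ j : Fin k,
        {x : Fin n → ℝ | (∀ l : Fin n, (l : ℕ) < i - 1 → x l ≤ b j l) ↔ j ∈ L} := by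
      ext x
      simp only [Set.mem_iInter, Set.mem_setOf_eq]
      exact hALmem L x
    rw [this]
    refine MeasurableSet.iInter fun j => ?_
    by_cases hj : j ∈ L
    · simp only [hj, iff_true]
      exact hPmeas j
    · simp only [hj, iff_false]
      exact (hPmeas j).compl
  have hCLmeas : ∀ L, MeasurableSet (CL L) := by
    intro L
    have : CL L = (fun t : ℝ => (t : EReal)) ⁻¹'
        Set.Ioc ((L \ J).sup fun j => ((b j idx : ℝ) : EReal))
          (J.inf fun j => ((b j idx : ℝ) : EReal)) := rfl
    rw [this]
    exact measurableSet_Ioc.preimage measurable_coe_real_ereal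
  have hDmeas : ∀ L, MeasurableSet (D L) := fun L =>
    (hALmeas L).inter ((hCLmeas L).preimage (measurable_pi_apply idx))
  -- splitting ∀ l < i
  have hsplit : ∀ (x : Fin n → ℝ) (j : Fin k),
      (∀ l : Fin n, (l : ℕ) < i → x l ≤ b j l) ↔
        ((∀ l : Fin n, (l : ℕ) < i - 1 → x l ≤ b j l) ∧ x idx ≤ b j idx) := by
    intro x j
    constructor
    · intro h
      exact ⟨fun l hl => h l (by omega), h idx (show i - 1 < i by omega)⟩
    · rintro ⟨h1, hx2⟩ l hl
      by_cases hc : (l : ℕ) < i - 1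
      · exact h1 l hc
      · have : l = idx := Fin.ext (show (l : ℕ) = i - 1 by omega)
        rw [this]; exact hx2
  have hSmem : ∀ x : Fin n → ℝ,
      x ∈ {x : Fin n → ℝ | {j | ∀ l : Fin n, (l : ℕ) < i → x l ≤ b j l} = ↑J} ↔
        ∀ j, ((∀ l : Fin n, (l : ℕ) < i → x l ≤ b j l) ↔ j ∈ J) := by
    intro x
    simp only [Set.mem_setOf_eq, Set.ext_iff, Finset.mem_coe]
  have hchar : ∀ x : Fin n → ℝ,
      x ∈ {x : Fin n → ℝ | {j | ∀ l : Fin n, (l : ℕ) < i → x l ≤ b j l} = ↑J} ↔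
        (J ⊆ L₀ x ∧ x idx ∈ CL (L₀ x)) := by
    intro x
    rw [hSmem]
    have heq : (∀ j, ((∀ l : Fin n, (l : ℕ) < i → x l ≤ b j l) ↔ j ∈ J)) ↔
        (∀ j, (j ∈ L₀ x ∧ x idx ≤ b j idx ↔ j ∈ J)) := by
      refine forall_congr' fun j => ?_
      rw [hsplit x j, hmemL₀ x j]
    rw [heq, core_iff J (L₀ x) (fun j => b j idx) (x idx)]
    exact Iff.rfl
  -- union decomposition
  have hunion : {x : Fin n → ℝ | {j | ∀ l : Fin n, (l : ℕ) < i → x l ≤ b j l} = ↑J}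
      = ⋃ L ∈ F, D L := by
    ext x
    rw [hchar x, Set.mem_iUnion₂]
    constructor
    · rintro ⟨hJL, hCL⟩
      refine ⟨L₀ x, ?_, (hx_AL x _).mpr rfl, hCL⟩
      simp [F, Finset.mem_filter, hJL]
    · rintro ⟨L, hLF, hxA, hxC⟩
      have hL : L = L₀ x := (hx_AL x L).mp hxA
      have hJL : J ⊆ L := by
        simp only [F, Finset.mem_filter] at hLF
        exact hLF.2
      subst hL
      exact ⟨hJL, hxC⟩
  have hdisj : ((F : Finset (Finset (Fin k))) : Set (Finset (Fin k))).PairwiseDisjoint D := by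
    intro L hL L' hL' hne
    refine Set.disjoint_left.mpr fun x hx hx' => hne ?_
    have h1 := (hx_AL x L).mp hx.1
    have h1' := (hx_AL x L').mp hx'.1
    rw [h1, h1']
  rw [hunion, measure_biUnion_finset hdisj (fun L _ => hDmeas L)]
  refine Finset.sum_congr rfl fun L hL => ?_
  have hinv : ∀ x y : Fin n → ℝ, (∀ j, j ≠ idx → x j = y j) → x ∈ AL L → y ∈ AL L := by
    intro x y hxy hx
    have heq : ∀ l : Fin n, (l : ℕ) < i - 1 → x l = y l := by
      intro l hl
      refine hxy l fun hcon => ?_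
      rw [hcon] at hl
      exact absurd (show i - 1 < i - 1 from hl) (by omega)
    rw [hx_AL] at hx ⊢
    rw [hx]
    ext j
    rw [hmemL₀, hmemL₀]
    exact forall_congr' fun l => forall_congr' fun hl => by rw [heq l hl]
  have step1 : Measure.pi μ (D L) = Measure.pi μ (AL L) * μ idx (CL L) :=
    aux_pi_eval μ idx (AL L) (hALmeas L) hinv (CL L) (hCLmeas L)
  have hcompl : μ idx (Set.Icc (0:ℝ) 1)ᶜ = 0 := by
    rw [measure_compl measurableSet_Icc (measure_ne_top _ _), hμ idx, measure_univ, tsub_self]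
  have step2 : μ idx (CL L ∩ Set.Icc 0 1) = μ idx (CL L) := measure_inter_conull hcompl
  exact step1.trans (by rw [← step2])
end

section
/- Let G = (V, E) be an undirected graph with vertex set V = [n]. For each edge e ∈ E let b_e ∈ {0,1}^n be the characteristic vector of V \ e (so (b_e)_i = 0 iff i ∈ e). Let μ be the uniform probability distribution on {0,1}^n, let B := { b_e : e ∈ E } ∪ {𝟙} where 𝟙 is the all-ones vector, and let c = 𝟙. Then E_μ[c_B] = (n − 2) + |{ U ⊆ [n] : U ∩ e ≠ ∅ for all e ∈ E }| / 2^{n−1}; equivalently, 2^{n−1} · (E_μ[c_B] − (n − 2)) equals the number of vertex covers of G. -/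
/-!
Every `b_e` costs `n - 2` and `𝟙` costs `n`, so `c_B(x) = n - 2` when the support of `x` misses
some edge and `c_B(x) = n` when it is a vertex cover; that is,
`c_B(x) = (n - 2) + 2 · [supp x is a vertex cover]`. Since `x ↦ supp x` is a bijection from
`{0,1}^n` onto the subsets of `[n]` and `μ` is uniform, averaging gives
`E_μ[c_B] = (n - 2) + 2 · #{vertex covers} / 2^n`.
-/

/-- The weight `μ_p({x}) = ∏_{i : x_i = 1} p_i · ∏_{i : x_i = 0} (1 − p_i)` of a point
`x ∈ {0,1}^n` under the product Bernoulli measure `μ_p`. -/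
noncomputable def bweight {n : ℕ} (p : Fin n → ℝ) (x : Fin n → Bool) : ℝ :=
  ∏ i, if x i then p i else 1 - p i

/-- The cost `cᵀb` of a binary vector `b ∈ {0,1}^n`. -/
noncomputable def bcost {n : ℕ} (c : Fin n → ℝ) (b : Fin n → Bool) : ℝ :=
  ∑ i, if b i then c i else 0

/-- `c_B(x) = min { cᵀb : b ∈ B, x ≤ b }` (with the convention `sInf ∅ = 0`;
for a Pareto cover the uncovered points have measure zero). -/
noncomputable def bmin {n : ℕ} (c : Fin n → ℝ) (B : Finset (Fin n → Bool)) (x : Fin n → Bool) : ℝ :=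
  sInf (bcost c '' {b | b ∈ B ∧ x ≤ b})

/-- `E_{μ_p}[c_B] = Σ_{x ∈ {0,1}^n} μ_p({x}) · c_B(x)`. -/
noncomputable def bexp {n : ℕ} (p c : Fin n → ℝ) (B : Finset (Fin n → Bool)) : ℝ :=
  ∑ x : Fin n → Bool, bweight p x * bmin c B x

-- `B` is a Pareto cover of `μ_p`: the covered points have total measure `1`.
open Classical in
noncomputable def bcover {n : ℕ} (p : Fin n → ℝ) (B : Finset (Fin n → Bool)) : Prop :=
  (∑ x : Fin n → Bool, if ∃ b ∈ B, x ≤ b then bweight p x else 0) = 1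

open Finset

section BinaryVectors

variable {n : ℕ}

lemma bweight_half (x : Fin n → Bool) : bweight (fun _ => (1 : ℝ) / 2) x = 2⁻¹ ^ n := by
  simp [bweight, show (1 : ℝ) - 2⁻¹ = 2⁻¹ by norm_num]

lemma bexp_half (c : Fin n → ℝ) (B : Finset (Fin n → Bool)) :
    bexp (fun _ => (1 : ℝ) / 2) c B = (∑ x, bmin c B x) / 2 ^ n := by
  simp only [bexp, bweight_half, ← mul_sum, inv_pow]
  ring

lemma bcost_one (b : Fin n → Bool) : bcost (fun _ => (1 : ℝ)) b = #{i | b i = true} := by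
  simp [bcost, sum_boole]

lemma le_decide_not_iff {α : Type*} (p : α → Prop) [DecidablePred p] (x : α → Bool) :
    x ≤ (fun i => decide ¬p i) ↔ ∀ i, x i = true → ¬p i := by
  refine forall_congr' fun i => ?_
  by_cases hi : p i <;> simp [hi, Bool.le_iff_imp]

open Classical in
lemma bmin_insert_of_bcost_eq {c : Fin n → ℝ} {S : Finset (Fin n → Bool)} {k : ℝ}
    (hS : ∀ b ∈ S, bcost c b = k) (hk : k ≤ bcost c (fun _ => true)) (x : Fin n → Bool) :
    bmin c (insert (fun _ => true) S) x =
      if ∃ b ∈ S, x ≤ b then k else bcost c (fun _ => true) := by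
  have hle_top : x ≤ fun _ => true := fun i => Bool.le_true _
  rw [bmin]
  split_ifs with hx
  · obtain ⟨b, hb, hxb⟩ := hx
    refine IsLeast.csInf_eq ⟨⟨b, ⟨mem_insert_of_mem hb, hxb⟩, hS b hb⟩, ?_⟩
    rintro _ ⟨b', ⟨hb', -⟩, rfl⟩
    rcases mem_insert.mp hb' with rfl | hb'
    · exact hk
    · exact (hS b' hb').ge
  · rw [← csInf_singleton (bcost c fun _ => true)]
    congr 1
    ext y
    constructor
    · rintro ⟨b, ⟨hb, hxb⟩, rfl⟩
      rcases mem_insert.mp hb with rfl | hb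
      · rfl
      · exact absurd ⟨b, hb, hxb⟩ hx
    · rintro rfl
      exact ⟨_, ⟨mem_insert_self _ _, hle_top⟩, rfl⟩

end BinaryVectors

def boolFunEquivFinset (α : Type*) [Fintype α] [DecidableEq α] :
    (α → Bool) ≃ Finset α where
  toFun x := {i | x i = true}
  invFun U i := decide (i ∈ U)
  left_inv x := by ext i; simp
  right_inv U := by ext; simp

section Graph

variable {n : ℕ} (G : SimpleGraph (Fin n)) [DecidableRel G.Adj]

abbrev edgeComplements : Finset (Fin n → Bool) :=
  insert (fun _ => true) (G.edgeFinset.image fun e i => decide (i ∉ e))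

open Classical in
abbrev vertexCovers : Finset (Finset (Fin n)) :=
  {U | ∀ e ∈ G.edgeFinset, ∃ v ∈ U, v ∈ e}

lemma bcost_one_edgeComplement {e : Sym2 (Fin n)} (he : e ∈ G.edgeFinset) :
    bcost (fun _ => (1 : ℝ)) (fun i => decide (i ∉ e)) = n - 2 := by
  have hcard : #e.toFinset = 2 :=
    Sym2.card_toFinset_of_not_isDiag e (G.not_isDiag_of_mem_edgeSet (G.mem_edgeFinset.mp he))
  have hn : 2 ≤ n := by simpa [hcard] using e.toFinset.card_le_univ
  have hsupport : ({i | decide (i ∉ e) = true} : Finset (Fin n)) = e.toFinsetᶜ := by ext; simp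
  rw [bcost_one, hsupport, card_compl, Fintype.card_fin, hcard, Nat.cast_sub hn]
  norm_num

open Classical in
lemma bmin_edgeComplements (x : Fin n → Bool) :
    bmin (fun _ => 1) (edgeComplements G) x =
      (n - 2) + 2 * if boolFunEquivFinset (Fin n) x ∈ vertexCovers G then 1 else 0 := by
  have hk : (n : ℝ) - 2 ≤ bcost (fun _ => 1) (fun _ : Fin n => true) := by simp [bcost]
  rw [bmin_insert_of_bcost_eq (k := n - 2) ?cost hk x]
  case cost =>
    simp only [mem_image]
    rintro _ ⟨e, he, rfl⟩
    exact bcost_one_edgeComplement G he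
  have hcover : (∃ b ∈ G.edgeFinset.image fun e i => decide (i ∉ e), x ≤ b) ↔
      boolFunEquivFinset (Fin n) x ∉ vertexCovers G := by
    simp only [mem_image, exists_exists_and_eq_and, le_decide_not_iff]
    simp [boolFunEquivFinset]
  simp only [hcover]
  split_ifs <;> simp [bcost]

open Classical in
lemma sum_bmin_edgeComplements :
    ∑ x, bmin (fun _ => 1) (edgeComplements G) x = 2 ^ n * (n - 2) + 2 * #(vertexCovers G) := by
  simp only [bmin_edgeComplements]
  rw [(boolFunEquivFinset (Fin n)).sum_comp
    (fun U => (n - 2 : ℝ) + 2 * if U ∈ vertexCovers G then 1 else 0)]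
  simp only [sum_add_distrib, ← mul_sum, sum_boole, filter_mem_eq_inter, univ_inter, sum_const,
    card_univ, Fintype.card_finset, Fintype.card_fin, nsmul_eq_mul]
  push_cast
  ring

end Graph

open Classical in
theorem stmt3 {n : ℕ} (G : SimpleGraph (Fin n)) [DecidableRel G.Adj]
    (B : Finset (Fin n → Bool))
    (hB : B = insert (fun _ => true)
        (G.edgeFinset.image (fun e => fun i => decide (i ∉ e)))) :
    bexp (fun _ => (1:ℝ)/2) (fun _ => (1:ℝ)) B =
        ((n:ℝ) - 2) +
          (((Finset.univ.filter
              (fun U : Finset (Fin n) => ∀ e ∈ G.edgeFinset, ∃ v ∈ U, v ∈ e)).card : ℝ) /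
            (2:ℝ)^((n:ℤ) - 1)) ∧
    (2:ℝ)^((n:ℤ) - 1) * (bexp (fun _ => (1:ℝ)/2) (fun _ => (1:ℝ)) B - ((n:ℝ) - 2)) =
      ((Finset.univ.filter
          (fun U : Finset (Fin n) => ∀ e ∈ G.edgeFinset, ∃ v ∈ U, v ∈ e)).card : ℝ) := by
  subst hB
  have hpow : (2 : ℝ) ^ ((n : ℤ) - 1) = 2 ^ n / 2 := by
    rw [zpow_sub₀ two_ne_zero, zpow_one, zpow_natCast]
  rw [bexp_half, sum_bmin_edgeComplements, hpow]
  constructor <;> field_simp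
  ring
end

section
/- Let a_1, …, a_n be positive integers, let α := 2/(Σ_{i=1}^n a_i), let β := α²/(48(n+1)), and let p ∈ [0,1]^n satisfy (1−β)·e^{−α·a_i} ≤ 1 − p_i ≤ (1+β)·e^{−α·a_i} for all i ∈ [n]. Let c ∈ ℝ^n with c_i = a_i for all i, let b ∈ {0,1}^n, let B = {b, 𝟙}, and let I := { i ∈ [n] : b_i = 0 }. Then, with h : ℝ → ℝ, h(x) = x·e^{−α·x}: Σ_{i=1}^n a_i − (1+β)^n · h(Σ_{i∈I} a_i) ≤ E_{μ_p}[c_B] ≤ Σ_{i=1}^n a_i − (1−β)^n · h(Σ_{i∈I} a_i). -/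
lemma sum_bool_prod {n : ℕ} (f : Fin n → Bool → ℝ) :
    (∑ x : Fin n → Bool, ∏ i, f i (x i)) = ∏ i, (f i true + f i false) := by
  have := Finset.prod_univ_sum (fun _ : Fin n => (Finset.univ : Finset Bool)) f
  simp only [Fintype.piFinset_univ, Fintype.sum_bool] at this
  rw [← this]

open Classical in
lemma bexp_pair {n : ℕ} (p c : Fin n → ℝ) (hc : ∀ i, 0 ≤ c i) (b : Fin n → Bool) :
    bexp p c {b, fun _ => true} =
      (∑ i, c i)
      - (∑ i ∈ Finset.univ.filter (fun i => b i = false), c i)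
        * ∏ i ∈ Finset.univ.filter (fun i => b i = false), (1 - p i) := by
  set I := Finset.univ.filter (fun i => b i = false) with hI
  have hS1 : bcost c (fun _ => true) = ∑ i, c i := by simp [bcost]
  have hsplit : (∑ i ∈ Finset.univ.filter (fun i => b i = true), c i) + ∑ i ∈ I, c i
      = ∑ i, c i := by
    rw [hI]
    have := Finset.sum_filter_add_sum_filter_not (Finset.univ : Finset (Fin n))
      (fun i => b i = true) c
    simpa using this
  have hSb : bcost c b = (∑ i, c i) - ∑ i ∈ I, c i := by
    rw [bcost, ← hsplit]
    rw [← Finset.sum_filter]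
    ring
  have hcb : bcost c b ≤ bcost c (fun _ => true) := by
    rw [hSb, hS1]
    have : (0:ℝ) ≤ ∑ i ∈ I, c i := Finset.sum_nonneg fun i _ => hc i
    linarith
  have h1 : ∀ x : Fin n → Bool, x ≤ (fun _ => true : Fin n → Bool) := fun x i => Bool.le_true _
  have hmin : ∀ x : Fin n → Bool, bmin c {b, fun _ => true} x
      = (∑ i, c i) - (if x ≤ b then ∑ i ∈ I, c i else 0) := by
    intro x
    by_cases hx : x ≤ b
    · have hset : {b' | b' ∈ ({b, fun _ => true} : Finset (Fin n → Bool)) ∧ x ≤ b'} = {b, fun _ => true} := by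
        ext b'
        simp only [Set.mem_setOf_eq, Finset.mem_insert, Finset.mem_singleton, Set.mem_insert_iff,
          Set.mem_singleton_iff]
        constructor
        · rintro ⟨h, -⟩; exact h
        · rintro (rfl | rfl)
          exacts [⟨Or.inl rfl, hx⟩, ⟨Or.inr rfl, h1 x⟩]
      rw [bmin, hset, Set.image_insert_eq, Set.image_singleton, csInf_pair, if_pos hx,
        min_eq_left hcb, hSb]
    · have hset : {b' | b' ∈ ({b, fun _ => true} : Finset (Fin n → Bool)) ∧ x ≤ b'} = {fun _ => true} := by
        ext b'
        simp only [Set.mem_setOf_eq, Finset.mem_insert, Finset.mem_singleton, Set.mem_singleton_iff]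
        constructor
        · rintro ⟨(rfl | rfl), h2⟩
          · exact absurd h2 hx
          · rfl
        · rintro rfl; exact ⟨Or.inr rfl, h1 x⟩
      rw [bmin, hset, Set.image_singleton, csInf_singleton, if_neg hx, hS1]
      ring
  have hw1 : (∑ x : Fin n → Bool, bweight p x) = ∏ i, (p i + (1 - p i)) := by
    unfold bweight
    exact sum_bool_prod (fun i v => if v then p i else 1 - p i)
  have hw1' : (∑ x : Fin n → Bool, bweight p x) = 1 := by
    rw [hw1]; simp
  have hind : ∀ x : Fin n → Bool, (if x ≤ b then (1:ℝ) else 0) = ∏ i, (if x i ≤ b i then (1:ℝ) else 0) := by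
    intro x
    by_cases hx : x ≤ b
    · rw [if_pos hx, eq_comm, Finset.prod_eq_one]
      intro i _
      rw [if_pos (hx i)]
    · rw [if_neg hx, eq_comm]
      obtain ⟨i, hi⟩ : ∃ i, ¬ x i ≤ b i := by
        by_contra hcon
        push_neg at hcon
        exact hx fun i => hcon i
      exact Finset.prod_eq_zero (Finset.mem_univ i) (by rw [if_neg hi])
  have hw2 : (∑ x : Fin n → Bool, if x ≤ b then bweight p x else 0) = ∏ i ∈ I, (1 - p i) := by
    have heq : ∀ x : Fin n → Bool, (if x ≤ b then bweight p x else 0)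
        = ∏ i, ((if x i then p i else 1 - p i) * (if x i ≤ b i then (1:ℝ) else 0)) := by
      intro x
      rw [Finset.prod_mul_distrib, ← bweight, ← hind x]
      by_cases hx : x ≤ b <;> simp [hx]
    rw [Finset.sum_congr rfl (fun x _ => heq x),
      sum_bool_prod (fun i v => (if v then p i else 1 - p i) * (if v ≤ b i then (1:ℝ) else 0))]
    have : ∀ i : Fin n, (if true then p i else 1 - p i) * (if true ≤ b i then (1:ℝ) else 0)
        + (if false then p i else 1 - p i) * (if false ≤ b i then (1:ℝ) else 0)
        = if b i = false then 1 - p i else 1 := by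
      intro i
      cases hbi : b i <;> simp
    rw [Finset.prod_congr rfl (fun i _ => this i), hI, Finset.prod_filter]
  calc bexp p c {b, fun _ => true}
      = ∑ x : Fin n → Bool, (bweight p x * (∑ i, c i)
          - (if x ≤ b then bweight p x else 0) * (∑ i ∈ I, c i)) := by
        unfold bexp
        refine Finset.sum_congr rfl fun x _ => ?_
        rw [hmin x]
        by_cases hx : x ≤ b <;> simp [hx] <;> ring
    _ = (∑ x : Fin n → Bool, bweight p x) * (∑ i, c i)
          - (∑ x : Fin n → Bool, if x ≤ b then bweight p x else 0) * (∑ i ∈ I, c i) := by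
        rw [Finset.sum_sub_distrib, ← Finset.sum_mul, ← Finset.sum_mul]
    _ = (∑ i, c i) - (∑ i ∈ I, c i) * ∏ i ∈ I, (1 - p i) := by
        rw [hw1', hw2]; ring


open Classical in
theorem stmt5 {n : ℕ} (a : Fin n → ℕ) (ha : ∀ i, 0 < a i)
    (α β : ℝ) (hα : α = 2 / ∑ i, (a i : ℝ)) (hβ : β = α^2 / (48 * (n+1)))
    (p : Fin n → ℝ) (hp : ∀ i, p i ∈ Set.Icc (0:ℝ) 1)
    (hpb : ∀ i, (1-β) * Real.exp (-(α * (a i : ℝ))) ≤ 1 - p i ∧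
                1 - p i ≤ (1+β) * Real.exp (-(α * (a i : ℝ))))
    (c : Fin n → ℝ) (hc : ∀ i, c i = (a i : ℝ))
    (b : Fin n → Bool) (B : Finset (Fin n → Bool)) (hB : B = {b, fun _ => true})
    (I : Finset (Fin n)) (hI : I = Finset.univ.filter (fun i => b i = false))
    (h : ℝ → ℝ) (hh : ∀ x, h x = x * Real.exp (-(α * x))) :
    (∑ i, (a i : ℝ)) - (1+β)^n * h (∑ i ∈ I, (a i : ℝ)) ≤ bexp p c B ∧
    bexp p c B ≤ (∑ i, (a i : ℝ)) - (1-β)^n * h (∑ i ∈ I, (a i : ℝ)) := by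
  subst hB hI
  set I := Finset.univ.filter (fun i => b i = false) with hI
  have hcnn : ∀ i, 0 ≤ c i := fun i => by rw [hc i]; positivity
  have hcsum : ∀ s : Finset (Fin n), (∑ i ∈ s, c i) = ∑ i ∈ s, (a i : ℝ) :=
    fun s => Finset.sum_congr rfl fun i _ => hc i
  set S := ∑ i, (a i : ℝ) with hSdef
  set t := ∑ i ∈ I, (a i : ℝ) with htdef
  have key : bexp p c {b, fun _ => true} = S - t * ∏ i ∈ I, (1 - p i) := by
    rw [bexp_pair p c hcnn b, ← hI, hcsum, hcsum]
  have ht0 : 0 ≤ t := Finset.sum_nonneg fun i _ => by positivity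
  have hβ0 : 0 ≤ β := by rw [hβ]; positivity
  have hβ1 : β ≤ 1 := by
    rcases Nat.eq_zero_or_pos n with hn | hn
    · subst hn
      have hS0 : S = 0 := by rw [hSdef]; simp
      rw [hβ, hα, hS0, div_zero]; norm_num
    · have hS1 : (1:ℝ) ≤ S := by
        calc (1:ℝ) ≤ n := by exact_mod_cast hn
        _ = ∑ _i : Fin n, (1:ℝ) := by simp
        _ ≤ S := Finset.sum_le_sum fun i _ => by exact_mod_cast ha i
      have hα0 : 0 ≤ α := by rw [hα]; positivity
      have hα2 : α ≤ 2 := by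
        rw [hα]
        rw [div_le_iff₀ (by linarith)]
        linarith
      have h48 : (48:ℝ) ≤ 48 * (n+1) := by
        have : (0:ℝ) ≤ (n:ℝ) := Nat.cast_nonneg n
        linarith
      rw [hβ, div_le_one (by positivity)]
      nlinarith
  set E := Real.exp (-(α * t)) with hEdef
  have hE0 : 0 ≤ E := Real.exp_nonneg _
  have hEprod : (∏ i ∈ I, Real.exp (-(α * (a i : ℝ)))) = E := by
    rw [← Real.exp_sum, hEdef]
    congr 1
    rw [htdef, Finset.mul_sum, ← Finset.sum_neg_distrib]
  have hcard : I.card ≤ n := by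
    simpa using Finset.card_le_card (Finset.subset_univ I)
  have hPlow : (1-β)^I.card * E ≤ ∏ i ∈ I, (1 - p i) := by
    have h1 : ∏ i ∈ I, ((1-β) * Real.exp (-(α * (a i : ℝ)))) ≤ ∏ i ∈ I, (1 - p i) :=
      Finset.prod_le_prod (fun i _ => mul_nonneg (by linarith) (Real.exp_nonneg _)) (fun i _ => (hpb i).1)
    rwa [Finset.prod_mul_distrib, Finset.prod_const, hEprod] at h1
  have hPhigh : (∏ i ∈ I, (1 - p i)) ≤ (1+β)^I.card * E := by
    have h1 : ∏ i ∈ I, (1 - p i) ≤ ∏ i ∈ I, ((1+β) * Real.exp (-(α * (a i : ℝ)))) :=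
      Finset.prod_le_prod (fun i _ => by linarith [(hp i).2]) (fun i _ => (hpb i).2)
    rwa [Finset.prod_mul_distrib, Finset.prod_const, hEprod] at h1
  have hpow1 : (1-β)^n ≤ (1-β)^I.card :=
    pow_le_pow_of_le_one (by linarith) (by linarith) hcard
  have hpow2 : (1+β)^I.card ≤ (1+β)^n :=
    pow_le_pow_right₀ (by linarith) hcard
  rw [key, hh]
  constructor
  · have h1 : t * ∏ i ∈ I, (1 - p i) ≤ t * ((1+β)^I.card * E) :=
      mul_le_mul_of_nonneg_left hPhigh ht0
    have h2 : t * ((1+β)^I.card * E) ≤ t * ((1+β)^n * E) := by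
      have := mul_le_mul_of_nonneg_right hpow2 hE0
      nlinarith
    nlinarith
  · have h1 : t * ((1-β)^n * E) ≤ t * ((1-β)^I.card * E) := by
      have := mul_le_mul_of_nonneg_right hpow1 hE0
      nlinarith
    have h2 : t * ((1-β)^I.card * E) ≤ t * ∏ i ∈ I, (1 - p i) :=
      mul_le_mul_of_nonneg_left hPlow ht0
    nlinarith
end

section
/- Let α ∈ (0,1] and let h : ℝ → ℝ be given by h(x) = x·e^{−α·x}. If x_0 ∈ ℝ satisfies |x_0 − α^{−1}| ≥ 1, then h(x_0) ≤ h(α^{−1}) · (1 − 0.25·α²·e^{−1}). -/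
/-- If `0 ≤ c` and `(1-c)*(c-t) ≥ 0` then `t e^{-t} ≤ c e^{-c}`. -/
lemma aux_mono (c t : ℝ) (hc : 0 ≤ c) (hct : 0 ≤ (1 - c) * (c - t)) :
    t * Real.exp (-t) ≤ c * Real.exp (-c) := by
  have h1 : 1 + (t - c) ≤ Real.exp (t - c) := by
    have := Real.add_one_le_exp (t - c); linarith
  have h2 : t ≤ c * Real.exp (t - c) := by
    nlinarith [mul_le_mul_of_nonneg_left h1 hc]
  calc t * Real.exp (-t) ≤ (c * Real.exp (t - c)) * Real.exp (-t) :=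
        mul_le_mul_of_nonneg_right h2 (Real.exp_pos _).le
    _ = c * Real.exp (-c) := by
        rw [mul_assoc, ← Real.exp_add]; ring_nf

lemma aux_exp_ub (α : ℝ) (h0 : 0 ≤ α) (h1 : α ≤ 1) :
    Real.exp α ≤ 1 + α + α^2/2 + (2/9)*α^3 := by
  have := Real.exp_bound (x:=α) (by rw [abs_of_nonneg h0]; exact h1) (n:=3) (by norm_num)
  simp [Finset.sum_range_succ, Nat.factorial, abs_of_nonneg h0] at this
  rw [abs_le] at this
  nlinarith [this.2]

lemma aux_exp_lb (α : ℝ) (h0 : 0 ≤ α) :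
    1 + α + α^2/4 ≤ Real.exp α := by
  have h1 : 1 + α/2 ≤ Real.exp (α/2) := by
    have := Real.add_one_le_exp (α/2); linarith
  have h2 : (1 + α/2)^2 ≤ (Real.exp (α/2))^2 := by
    have : (0:ℝ) ≤ 1 + α/2 := by linarith
    nlinarith
  have h3 : (Real.exp (α/2))^2 = Real.exp α := by
    rw [sq, ← Real.exp_add]; norm_num
  nlinarith [h2, h3]

theorem stmt6 (α : ℝ) (hα : α ∈ Set.Ioc (0:ℝ) 1) (h : ℝ → ℝ)
    (hh : ∀ x, h x = x * Real.exp (-(α * x)))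
    (x₀ : ℝ) (hx₀ : 1 ≤ |x₀ - α⁻¹|) :
    h x₀ ≤ (α⁻¹ * Real.exp (-1)) * (1 - 0.25 * α^2 * Real.exp (-1)) := by
  obtain ⟨hα0, hα1⟩ := hα
  have hαne : α ≠ 0 := ne_of_gt hα0
  have hαinv : 0 < α⁻¹ := inv_pos.mpr hα0
  have hrw : h x₀ = α⁻¹ * ((α * x₀) * Real.exp (-(α * x₀))) := by
    rw [hh]; field_simp
  -- numeric facts about e⁻¹
  have he_gt : (2.7 : ℝ) < Real.exp 1 := by
    have := Real.exp_one_gt_d9; linarith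
  have heinv_pos : 0 < Real.exp (-1 : ℝ) := Real.exp_pos _
  have heinv_lt : Real.exp (-1 : ℝ) < 1/2.7 := by
    rw [Real.exp_neg, inv_lt_comm₀ (by positivity) (by norm_num)]
    simpa using he_gt
  have hc : 0.25 * α^2 * Real.exp (-1) ≤ α^2/10 := by
    nlinarith [sq_nonneg α, heinv_lt, heinv_pos]
  have hc0 : (0:ℝ) ≤ 0.25 * α^2 * Real.exp (-1) := by positivity
  -- it suffices to bound t e^{-t} for t = α x₀
  have key : (α * x₀) * Real.exp (-(α * x₀)) ≤
      Real.exp (-1) * (1 - 0.25 * α^2 * Real.exp (-1)) := by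
    rcases le_abs.mp hx₀ with hcase | hcase
    · -- x₀ ≥ α⁻¹ + 1, so α x₀ ≥ 1 + α
      have htc : 1 + α ≤ α * x₀ := by
        have : α * (α⁻¹ + 1) ≤ α * x₀ :=
          mul_le_mul_of_nonneg_left (by linarith) hα0.le
        rw [mul_add, mul_inv_cancel₀ hαne] at this
        linarith
      have hmono := aux_mono (1 + α) (α * x₀) (by linarith) (by nlinarith)
      have hsplit : Real.exp (-(1 + α)) = Real.exp (-α) * Real.exp (-1) := by
        rw [← Real.exp_add]; ring_nf
      have hlb := aux_exp_lb α hα0.le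
      have hepos : 0 < Real.exp α := Real.exp_pos _
      have hfin : (1 + α) * Real.exp (-α) ≤ 1 - 0.25 * α^2 * Real.exp (-1) := by
        rw [Real.exp_neg, mul_inv_le_iff₀ hepos]
        have h1c : 0.25 * α^2 * Real.exp (-1) ≤ 1/10 := by nlinarith [hc, sq_nonneg α]
        nlinarith [mul_le_mul_of_nonneg_left hlb
            (by linarith : (0:ℝ) ≤ 1 - 0.25 * α^2 * Real.exp (-1)),
          hc, hc0, sq_nonneg α,
          mul_le_mul_of_nonneg_right hc (by linarith : (0:ℝ) ≤ 1 + α + α^2/4)]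
      calc (α * x₀) * Real.exp (-(α * x₀)) ≤ (1 + α) * Real.exp (-(1 + α)) := hmono
        _ = ((1 + α) * Real.exp (-α)) * Real.exp (-1) := by rw [hsplit]; ring
        _ ≤ (1 - 0.25 * α^2 * Real.exp (-1)) * Real.exp (-1) :=
            mul_le_mul_of_nonneg_right hfin heinv_pos.le
        _ = Real.exp (-1) * (1 - 0.25 * α^2 * Real.exp (-1)) := by ring
    · -- x₀ ≤ α⁻¹ - 1, so α x₀ ≤ 1 - α
      have htc : α * x₀ ≤ 1 - α := by
        have : α * x₀ ≤ α * (α⁻¹ - 1) :=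
          mul_le_mul_of_nonneg_left (by linarith) hα0.le
        rw [mul_sub, mul_inv_cancel₀ hαne] at this
        linarith
      have hmono := aux_mono (1 - α) (α * x₀) (by linarith) (by nlinarith)
      have hsplit : Real.exp (-(1 - α)) = Real.exp α * Real.exp (-1) := by
        rw [← Real.exp_add]; ring_nf
      have hub := aux_exp_ub α hα0.le hα1
      have hfin : (1 - α) * Real.exp α ≤ 1 - 0.25 * α^2 * Real.exp (-1) := by
        have h1 : (1 - α) * Real.exp α ≤ 1 - α^2/2 := by
          nlinarith [mul_le_mul_of_nonneg_left hub (by linarith : (0:ℝ) ≤ 1 - α)]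
        linarith [hc]
      calc (α * x₀) * Real.exp (-(α * x₀)) ≤ (1 - α) * Real.exp (-(1 - α)) := hmono
        _ = ((1 - α) * Real.exp α) * Real.exp (-1) := by rw [hsplit]; ring
        _ ≤ (1 - 0.25 * α^2 * Real.exp (-1)) * Real.exp (-1) :=
            mul_le_mul_of_nonneg_right hfin heinv_pos.le
        _ = Real.exp (-1) * (1 - 0.25 * α^2 * Real.exp (-1)) := by ring
  rw [hrw]
  calc α⁻¹ * (α * x₀ * Real.exp (-(α * x₀)))
      ≤ α⁻¹ * (Real.exp (-1) * (1 - 0.25 * α^2 * Real.exp (-1))) :=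
        mul_le_mul_of_nonneg_left key hαinv.le
    _ = (α⁻¹ * Real.exp (-1)) * (1 - 0.25 * α^2 * Real.exp (-1)) := by ring
end

section
/- Let a_1, …, a_n be positive integers with Σ_{i=1}^n a_i even, let α := 2/(Σ_{i=1}^n a_i) and β := α²/(48(n+1)). Let p ∈ (0,1]^n satisfy (1−β)·e^{−α·a_i} ≤ 1 − p_i ≤ (1+β)·e^{−α·a_i} for all i ∈ [n], let γ ∈ ℝ satisfy (1−β)^{n+2}/(α·e) ≤ Σ_{i=1}^n a_i − γ ≤ (1−β)^n/(α·e), and let c ∈ ℝ^n with c_i = a_i for all i. Then the following are equivalent: (i) there exists a subset I ⊆ [n] with Σ_{i∈I} a_i = (1/2)·Σ_{i=1}^n a_i; (ii) there exists a Pareto cover B of μ_p with |B| = 2 and E_{μ_p}[c_B] ≤ γ. -/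
/-- The binary vector `x ∈ {0,1}^n` viewed as a real vector. -/
noncomputable def toRealVec {n : ℕ} (x : Fin n → Bool) : Fin n → ℝ :=
  fun i => if x i then 1 else 0

-- `c_B(x) = min { cᵀb : b ∈ B, x ≤ b }` for a set `B ⊆ [0,1]^n` of real vectors.
noncomputable def rmin {n : ℕ} (c : Fin n → ℝ) (B : Finset (Fin n → ℝ)) (x : Fin n → Bool) : ℝ :=
  sInf ((fun b => ∑ i, c i * b i) '' {b | b ∈ B ∧ toRealVec x ≤ b})

-- `E_{μ_p}[c_B]` for a set `B ⊆ [0,1]^n` of real vectors.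
noncomputable def rexp {n : ℕ} (p c : Fin n → ℝ) (B : Finset (Fin n → ℝ)) : ℝ :=
  ∑ x : Fin n → Bool, bweight p x * rmin c B x

-- `B ⊆ [0,1]^n` is a Pareto cover of `μ_p`.
open Classical in
noncomputable def rcover {n : ℕ} (p : Fin n → ℝ) (B : Finset (Fin n → ℝ)) : Prop :=
  (∑ x : Fin n → Bool, if ∃ b ∈ B, toRealVec x ≤ b then bweight p x else 0) = 1

section aux
variable {n : ℕ}

lemma sum_prod_bool (f : Fin n → Bool → ℝ) :
    ∑ x : Fin n → Bool, ∏ i, f i (x i) = ∏ i, (f i true + f i false) := by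
  have := Finset.prod_univ_sum (fun _ : Fin n => (Finset.univ : Finset Bool)) f
  simp only [Fintype.piFinset_univ] at this
  rw [← this]
  exact Finset.prod_congr rfl fun i _ => by simp [Fintype.sum_bool]

lemma sum_bweight (p : Fin n → ℝ) :
    ∑ x : Fin n → Bool, bweight p x = 1 := by
  have := sum_prod_bool (fun i (v : Bool) => if v then p i else 1 - p i)
  simp only [bweight]
  rw [this]; simp

open Classical in
lemma sum_bweight_event (p : Fin n → ℝ) (J : Finset (Fin n)) :
    ∑ x : Fin n → Bool, (if (∀ i, x i = true → i ∈ J) then bweight p x else 0)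
      = ∏ i ∈ Jᶜ, (1 - p i) := by
  have key : ∀ x : Fin n → Bool,
      (if (∀ i, x i = true → i ∈ J) then bweight p x else 0)
        = ∏ i, (fun i (v : Bool) => if v then (if i ∈ J then p i else 0) else 1 - p i) i (x i) := by
    intro x
    by_cases h : ∀ i, x i = true → i ∈ J
    · rw [if_pos h, bweight]
      refine Finset.prod_congr rfl fun i _ => ?_
      by_cases hx : x i
      · simp [hx, h i hx]
      · simp [hx]
    · rw [if_neg h]
      push_neg at h
      obtain ⟨i, hxi, hiJ⟩ := h
      exact (Finset.prod_eq_zero (Finset.mem_univ i) (by simp [hxi, hiJ])).symm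
  rw [Finset.sum_congr rfl (fun x _ => key x),
    sum_prod_bool (fun i (v : Bool) => if v then (if i ∈ J then p i else 0) else 1 - p i)]
  simp only [if_true, Bool.false_eq_true, if_false]
  rw [← Finset.prod_mul_prod_compl J]
  have h1 : ∏ i ∈ J, ((if i ∈ J then p i else 0) + (1 - p i)) = 1 :=
    Finset.prod_eq_one fun i hi => by simp [hi]
  have h2 : ∏ i ∈ Jᶜ, ((if i ∈ J then p i else 0) + (1 - p i)) = ∏ i ∈ Jᶜ, (1 - p i) :=
    Finset.prod_congr rfl fun i hi => by simp [Finset.mem_compl.mp hi]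
  rw [h1, h2, one_mul]

lemma ana_A {u α : ℝ} (hu0 : 0 ≤ u) (hu2 : u ≤ 2) (hα0 : 0 < α) (hα1 : α ≤ 1)
    (hd : α ≤ |u - 1|) : u * Real.exp (1 - u) ≤ 1 - α^2 / 9 := by
  set E := Real.exp (u - 1) with hE
  have hEpos : 0 < E := Real.exp_pos _
  have hexp1u : Real.exp (1 - u) = E⁻¹ := by
    rw [hE, ← Real.exp_neg]; ring_nf
  have hc0 : (0:ℝ) ≤ 1 - α^2/9 := by nlinarith
  rw [hexp1u, ← div_eq_mul_inv, div_le_iff₀ hEpos]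
  rcases le_total 1 u with h | h
  · have hd0 : α ≤ u - 1 := by rwa [abs_of_nonneg (by linarith)] at hd
    have hd1 : u - 1 ≤ 1 := by linarith
    have hexp : 1 + (u-1)/2 ≤ Real.exp ((u-1)/2) := by
      have := Real.add_one_le_exp ((u-1)/2); linarith
    have he : (1 + (u-1)/2)^2 ≤ E := by
      have h2 : E = (Real.exp ((u-1)/2))^2 := by
        rw [hE, ← Real.exp_nat_mul]; ring_nf
      rw [h2]
      exact pow_le_pow_left₀ (by linarith) hexp 2
    have hsq : α^2 ≤ (u-1)^2 := by nlinarith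
    have hpoly : u ≤ (1 - α^2/9) * (1 + (u-1)/2)^2 := by
      nlinarith [mul_nonneg (sub_nonneg.mpr hsq) (sq_nonneg (1+(u-1)/2)),
        mul_nonneg (mul_nonneg (sq_nonneg (u-1)) (by linarith : (0:ℝ) ≤ 1 - (u-1)))
          (by linarith : (0:ℝ) ≤ 5 + (u-1))]
    nlinarith [mul_le_mul_of_nonneg_left he hc0]
  · have hd0 : α ≤ 1 - u := by rwa [abs_of_nonpos (by linarith), neg_sub] at hd
    have hd1 : 1 - u ≤ 1 := by linarith
    have hexp : 1 - (1-u)/2 ≤ Real.exp (-((1-u)/2)) := by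
      have := Real.add_one_le_exp (-((1-u)/2)); linarith
    have he : (1 - (1-u)/2)^2 ≤ E := by
      have h2 : E = (Real.exp (-((1-u)/2)))^2 := by
        rw [hE, ← Real.exp_nat_mul]; ring_nf
      rw [h2]
      exact pow_le_pow_left₀ (by linarith) hexp 2
    have hsq : α^2 ≤ (1-u)^2 := by nlinarith
    have hpoly : u ≤ (1 - α^2/9) * (1 - (1-u)/2)^2 := by
      nlinarith [mul_nonneg (sub_nonneg.mpr hsq) (sq_nonneg (1-(1-u)/2)),
        mul_nonneg (mul_nonneg (sq_nonneg (1-u)) (by linarith : (0:ℝ) ≤ 1 + (1-u)))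
          (by linarith : (0:ℝ) ≤ 5 - (1-u))]
    nlinarith [mul_le_mul_of_nonneg_left he hc0]

lemma ana_B {n : ℕ} {α β : ℝ} (hα0 : 0 < α) (hα1 : α ≤ 1)
    (hβ : β = α^2 / (48 * (n+1))) :
    (1+β)^n * (1 - α^2/9) < (1-β)^(n+2) := by
  have hn1 : (0:ℝ) < (n:ℝ) + 1 := by positivity
  have hβ0 : 0 < β := by rw [hβ]; positivity
  have hain : α^2 ≤ 1 := by nlinarith
  have hβn : (n:ℝ) * β ≤ α^2/48 := by
    rw [hβ, ← mul_div_assoc, div_le_div_iff₀ (by positivity) (by norm_num)]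
    nlinarith [sq_nonneg α]
  have heq : (2*(n:ℝ)+2)*β = α^2/24 := by
    rw [hβ]; field_simp; ring
  have hβn2 : ((n:ℝ)+2) * β ≤ α^2/24 := by nlinarith [Nat.cast_nonneg (α := ℝ) n]
  have hnb0 : (0:ℝ) ≤ (n:ℝ)*β := by positivity
  have hβ48 : β ≤ 1/48 := by nlinarith
  have h1 : (1+β)^n ≤ Real.exp ((n:ℝ)*β) := by
    calc (1+β)^n ≤ (Real.exp β)^n :=
          pow_le_pow_left₀ (by linarith) (by have := Real.add_one_le_exp β; linarith) n
      _ = Real.exp ((n:ℝ)*β) := by rw [← Real.exp_nat_mul]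
  have h2 : Real.exp ((n:ℝ)*β) * (1 - (n:ℝ)*β) ≤ 1 := by
    have hh := Real.add_one_le_exp (-((n:ℝ)*β))
    have hpos := Real.exp_pos ((n:ℝ)*β)
    have h' : (1 - (n:ℝ)*β) ≤ Real.exp (-((n:ℝ)*β)) := by linarith
    calc Real.exp ((n:ℝ)*β) * (1 - (n:ℝ)*β) ≤ Real.exp ((n:ℝ)*β) * Real.exp (-((n:ℝ)*β)) :=
          mul_le_mul_of_nonneg_left h' (le_of_lt hpos)
      _ = 1 := by rw [← Real.exp_add]; simp
  have h3 : (1+β)^n * (1 - (n:ℝ)*β) ≤ 1 :=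
    le_trans (mul_le_mul_of_nonneg_right h1 (by linarith)) h2
  have h4 : 1 - ((n:ℝ)+2)*β ≤ (1-β)^(n+2) := by
    have hb := one_add_mul_le_pow (a := -β) (by linarith) (n+2)
    push_cast at hb
    calc 1 - ((n:ℝ)+2)*β = 1 + ((n:ℝ)+2) * (-β) := by ring
      _ ≤ (1 + -β)^(n+2) := hb
      _ = (1-β)^(n+2) := by ring_nf
  have hP1 : (1:ℝ) ≤ (1+β)^n := one_le_pow₀ (by linarith)
  have hkey : (n:ℝ)*β ≤ α^2/9 := by nlinarith
  have hprod : 0 ≤ ((1+β)^n - 1) * (α^2/9 - (n:ℝ)*β) :=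
    mul_nonneg (by linarith) (by linarith)
  have h5 : (1+β)^n * (1 - α^2/9) < 1 - ((n:ℝ)+2)*β := by nlinarith [sq_nonneg α]
  linarith

lemma toRealVec_le_one (x : Fin n → Bool) : toRealVec x ≤ (fun _ => (1:ℝ)) := by
  intro i
  simp only [toRealVec]
  split <;> norm_num

lemma toRealVec_le_iff {x : Fin n → Bool} {b : Fin n → ℝ} (hb : ∀ i, 0 ≤ b i) :
    toRealVec x ≤ b ↔ ∀ i, x i = true → 1 ≤ b i := by
  constructor
  · intro h i hi
    have := h i
    simpa [toRealVec, hi] using this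
  · intro h i
    simp only [toRealVec]
    by_cases hx : x i
    · simpa [hx] using h i hx
    · simpa [hx] using hb i

lemma rmin_bdd (c : Fin n → ℝ) (B : Finset (Fin n → ℝ)) (x : Fin n → Bool) :
    BddBelow ((fun b => ∑ i, c i * b i) '' {b | b ∈ B ∧ toRealVec x ≤ b}) :=
  Set.Finite.bddBelow (Set.Finite.image _ (B.finite_toSet.subset fun b hb => hb.1))

end aux

set_option maxHeartbeats 4000000 in
theorem stmt7 {n : ℕ} (hn : 0 < n) (a : Fin n → ℕ) (ha : ∀ i, 0 < a i)
    (heven : 2 ∣ ∑ i, a i)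
    (α β : ℝ) (hα : α = 2 / ∑ i, (a i : ℝ)) (hβ : β = α^2 / (48 * (n+1)))
    (p : Fin n → ℝ) (hp : ∀ i, p i ∈ Set.Ioc (0:ℝ) 1)
    (hpb : ∀ i, (1-β) * Real.exp (-(α * (a i : ℝ))) ≤ 1 - p i ∧
                1 - p i ≤ (1+β) * Real.exp (-(α * (a i : ℝ))))
    (γ : ℝ)
    (hγ₁ : (1-β)^(n+2) / (α * Real.exp 1) ≤ (∑ i, (a i : ℝ)) - γ)
    (hγ₂ : (∑ i, (a i : ℝ)) - γ ≤ (1-β)^n / (α * Real.exp 1))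
    (c : Fin n → ℝ) (hc : ∀ i, c i = (a i : ℝ)) :
    (∃ I : Finset (Fin n), 2 * ∑ i ∈ I, a i = ∑ i, a i) ↔
      ∃ B : Finset (Fin n → ℝ), (∀ b ∈ B, ∀ i, b i ∈ Set.Icc (0:ℝ) 1) ∧
        rcover p B ∧ B.card = 2 ∧ rexp p c B ≤ γ := by
  classical
  have hFin : Nonempty (Fin n) := ⟨⟨0, hn⟩⟩
  set S : ℝ := ∑ i, (a i : ℝ) with hSdef
  have hSpos : 0 < S := Finset.sum_pos (fun i _ => by exact_mod_cast ha i) Finset.univ_nonempty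
  have hα0 : 0 < α := by rw [hα]; positivity
  have hαS : α * S = 2 := by rw [hα]; field_simp
  have hSnat : S = ((∑ i, a i : ℕ) : ℝ) := by rw [hSdef]; push_cast; ring
  have hSnpos : 0 < ∑ i, a i := by
    have h := hSpos; rw [hSnat] at h; exact_mod_cast h
  have hSn2 : 2 ≤ ∑ i, a i := by omega
  have hS2 : 2 ≤ S := by rw [hSnat]; exact_mod_cast hSn2
  have hα1 : α ≤ 1 := by
    rw [hα]; rw [div_le_one (by linarith)]; exact hS2
  have hβ0 : 0 < β := by rw [hβ]; positivity
  have hβlt : β < 1 := by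
    have h1 : α^2 ≤ 1 := by nlinarith
    rw [hβ]
    rw [div_lt_one (by positivity)]
    nlinarith [Nat.cast_nonneg (α := ℝ) n]
  have hw0 : ∀ x : Fin n → Bool, 0 ≤ bweight p x := by
    intro x
    apply Finset.prod_nonneg
    intro i _
    by_cases hx : x i
    · simpa [hx] using (hp i).1.le
    · have := (hp i).2; simp [hx]; linarith
  have hepos : (0:ℝ) < Real.exp 1 := Real.exp_pos 1
  constructor
  · rintro ⟨I, hI⟩
    have hSI2 : 2 * ∑ i ∈ I, (a i : ℝ) = S := by
      rw [hSnat]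
      have h := congrArg (fun m : ℕ => (m : ℝ)) hI
      push_cast at h
      linarith
    set SI : ℝ := ∑ i ∈ I, (a i : ℝ) with hSIdef
    have hαSI : α * SI = 1 := by nlinarith
    have hSIpos : 0 < SI := by nlinarith
    have hIne : I.Nonempty := by
      rcases I.eq_empty_or_nonempty with h | h
      · exfalso
        have : SI = 0 := by rw [hSIdef, h, Finset.sum_empty]
        linarith
      · exact h
    obtain ⟨i₀, hi₀⟩ := hIne
    set bv : Fin n → ℝ := fun i => if i ∈ I then 0 else 1 with hbv
    set ov : Fin n → ℝ := fun _ => 1 with hov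
    have hbvov : bv ≠ ov := by
      intro h
      have := congrFun h i₀
      simp [hbv, hov, hi₀] at this
    have hbv0 : ∀ i, 0 ≤ bv i := by
      intro i; rw [hbv]; dsimp only; split <;> norm_num
    refine ⟨{bv, ov}, ?_, ?_, ?_, ?_⟩
    · intro b hb i
      rcases Finset.mem_insert.mp hb with h | h
      · subst h; constructor
        · exact hbv0 i
        · rw [hbv]; dsimp only; split <;> norm_num
      · rw [Finset.mem_singleton] at h; subst h
        constructor <;> simp [hov]
    · unfold rcover
      have hcv : ∀ x : Fin n → Bool, ∃ b ∈ ({bv, ov} : Finset (Fin n → ℝ)), toRealVec x ≤ b :=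
        fun x => ⟨ov, by simp, by rw [hov]; exact toRealVec_le_one x⟩
      rw [Finset.sum_congr rfl (fun x _ => if_pos (hcv x))]
      exact sum_bweight p
    · rw [Finset.card_insert_of_notMem (by simpa using hbvov), Finset.card_singleton]
    · -- rexp bound
      have hcostov : ∑ i, c i * ov i = S := by
        simp only [hov, mul_one]
        rw [hSdef]
        exact Finset.sum_congr rfl fun i _ => hc i
      have hcostbv : ∑ i, c i * bv i = S - SI := by
        have h1 : ∀ i, c i * bv i = (a i : ℝ) - (if i ∈ I then (a i:ℝ) else 0) := by
          intro i; rw [hc, hbv]; by_cases h : i ∈ I <;> simp [h]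
        rw [Finset.sum_congr rfl (fun i _ => h1 i), Finset.sum_sub_distrib]
        rw [Finset.sum_ite_mem, Finset.univ_inter, ← hSdef, ← hSIdef]
      have hpt : ∀ x : Fin n → Bool,
          rmin c {bv, ov} x ≤ (if (∀ i, x i = true → i ∈ Iᶜ) then S - SI else S) := by
        intro x
        by_cases hcond : ∀ i, x i = true → i ∈ Iᶜ
        · rw [if_pos hcond, ← hcostbv]
          apply csInf_le (rmin_bdd c _ x)
          refine ⟨bv, ⟨by simp, ?_⟩, rfl⟩
          rw [toRealVec_le_iff hbv0]
          intro i hi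
          have h2 := Finset.mem_compl.mp (hcond i hi)
          rw [hbv]; simp [h2]
        · rw [if_neg hcond, ← hcostov]
          apply csInf_le (rmin_bdd c _ x)
          exact ⟨ov, ⟨by simp, by rw [hov]; exact toRealVec_le_one x⟩, rfl⟩
      have hsum2 : ∑ x : Fin n → Bool,
          bweight p x * (if (∀ i, x i = true → i ∈ Iᶜ) then S - SI else S)
          = S - SI * ∏ i ∈ I, (1 - p i) := by
        have h1 : ∀ x : Fin n → Bool,
            bweight p x * (if (∀ i, x i = true → i ∈ Iᶜ) then S - SI else S)
            = S * bweight p x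
              - SI * (if (∀ i, x i = true → i ∈ Iᶜ) then bweight p x else 0) := by
          intro x
          by_cases hcond : ∀ i, x i = true → i ∈ Iᶜ
          · rw [if_pos hcond, if_pos hcond]; ring
          · rw [if_neg hcond, if_neg hcond]; ring
        rw [Finset.sum_congr rfl (fun x _ => h1 x), Finset.sum_sub_distrib,
          ← Finset.mul_sum, ← Finset.mul_sum, sum_bweight, sum_bweight_event p Iᶜ,
          compl_compl, mul_one]
      have hexp_le : rexp p c {bv, ov} ≤ S - SI * ∏ i ∈ I, (1 - p i) := by
        rw [rexp, ← hsum2]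
        exact Finset.sum_le_sum fun x _ => mul_le_mul_of_nonneg_left (hpt x) (hw0 x)
      have hQ : (1-β)^n * Real.exp (-1) ≤ ∏ i ∈ I, (1 - p i) := by
        have step1 : ∏ i ∈ I, ((1-β) * Real.exp (-(α * (a i:ℝ)))) ≤ ∏ i ∈ I, (1 - p i) := by
          apply Finset.prod_le_prod
          · intro i _
            have := Real.exp_pos (-(α * (a i:ℝ)))
            nlinarith
          · intro i _; exact (hpb i).1
        have step2 : ∏ i ∈ I, ((1-β) * Real.exp (-(α * (a i:ℝ))))
            = (1-β)^I.card * Real.exp (-1) := by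
          rw [Finset.prod_mul_distrib, Finset.prod_const, ← Real.exp_sum]
          congr 1
          have : ∑ i ∈ I, -(α * (a i:ℝ)) = -(α * SI) := by
            rw [hSIdef, Finset.mul_sum, ← Finset.sum_neg_distrib]
          rw [this, hαSI]
        have step3 : (1-β)^n ≤ (1-β)^I.card := by
          apply pow_le_pow_of_le_one (by linarith) (by linarith)
          calc I.card ≤ Finset.univ.card := Finset.card_le_univ I
            _ = n := by rw [Finset.card_univ, Fintype.card_fin]
        calc (1-β)^n * Real.exp (-1) ≤ (1-β)^I.card * Real.exp (-1) :=
              mul_le_mul_of_nonneg_right step3 (Real.exp_pos _).le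
          _ = ∏ i ∈ I, ((1-β) * Real.exp (-(α * (a i:ℝ)))) := step2.symm
          _ ≤ ∏ i ∈ I, (1 - p i) := step1
      have hSIγ : S - γ ≤ SI * ∏ i ∈ I, (1 - p i) := by
        have heq2 : SI * ((1-β)^n * Real.exp (-1)) = (1-β)^n / (α * Real.exp 1) := by
          rw [Real.exp_neg]
          rw [eq_div_iff (by positivity)]
          calc SI * ((1-β)^n * (Real.exp 1)⁻¹) * (α * Real.exp 1)
              = (α * SI) * (1-β)^n * ((Real.exp 1)⁻¹ * Real.exp 1) := by ring
            _ = (1-β)^n := by rw [hαSI, inv_mul_cancel₀ (Real.exp_pos 1).ne']; ring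
        calc S - γ ≤ (1-β)^n / (α * Real.exp 1) := hγ₂
          _ = SI * ((1-β)^n * Real.exp (-1)) := heq2.symm
          _ ≤ SI * ∏ i ∈ I, (1 - p i) := mul_le_mul_of_nonneg_left hQ hSIpos.le
      linarith
  · rintro ⟨B, hBmem, hBcov, hBcard, hBexp⟩
    have hwT : 0 < bweight p (fun _ => true) := by
      rw [bweight]
      apply Finset.prod_pos
      intro i _
      simpa using (hp i).1
    have hex : ∃ b ∈ B, toRealVec (fun _ => true) ≤ b := by
      by_contra hno
      unfold rcover at hBcov
      have hle : (∑ x : Fin n → Bool, if ∃ b ∈ B, toRealVec x ≤ b then bweight p x else 0)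
          ≤ ∑ x : Fin n → Bool,
            (bweight p x - (if x = (fun _ => true) then bweight p x else 0)) := by
        apply Finset.sum_le_sum
        intro x _
        by_cases hxx : x = (fun _ => true)
        · subst hxx
          rw [if_neg hno, if_pos rfl]
          simp
        · rw [if_neg hxx]
          split
          · simp [hxx]
          · simpa [hxx] using hw0 x
      rw [Finset.sum_sub_distrib, sum_bweight,
        Finset.sum_ite_eq' Finset.univ (fun _ => true) (bweight p)] at hle
      simp only [Finset.mem_univ, if_true] at hle
      rw [hBcov] at hle
      linarith
    obtain ⟨b1, hb1B, hb1le⟩ := hex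
    have hb1 : b1 = (fun _ => (1:ℝ)) := by
      funext i
      refine le_antisymm ((hBmem b1 hb1B i).2) ?_
      have := hb1le i
      simpa [toRealVec] using this
    rw [hb1] at hb1B
    obtain ⟨u, v, huv, hBuv⟩ := Finset.card_eq_two.mp hBcard
    have hob : ∃ b, b ≠ (fun _ => (1:ℝ)) ∧ B = {b, (fun _ => (1:ℝ))} := by
      rw [hBuv] at hb1B
      rcases Finset.mem_insert.mp hb1B with h | h
      · exact ⟨v, fun hv => huv (by rw [← h, hv]), by rw [hBuv, ← h, Finset.pair_comm]⟩
      · rw [Finset.mem_singleton] at h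
        exact ⟨u, fun hu => huv (hu.trans h), by rw [hBuv, ← h]⟩
    obtain ⟨b, hbne, hBeq⟩ := hob
    subst hBeq
    have hbB : b ∈ ({b, (fun _ => (1:ℝ))} : Finset (Fin n → ℝ)) := by simp
    have hbmem : ∀ i, 0 ≤ b i ∧ b i ≤ 1 :=
      fun i => ⟨(hBmem b hbB i).1, (hBmem b hbB i).2⟩
    set J : Finset (Fin n) := Finset.univ.filter (fun i => 1 ≤ b i) with hJ
    have hbJ : ∀ i ∈ J, b i = 1 :=
      fun i hi => le_antisymm (hbmem i).2 ((Finset.mem_filter.mp hi).2)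
    set AJ : ℝ := ∑ i ∈ J, (a i : ℝ) with hAJ
    set T : ℝ := ∑ i ∈ Jᶜ, (a i : ℝ) with hT
    have hAT : AJ + T = S := by
      rw [hAJ, hT, hSdef]; exact Finset.sum_add_sum_compl J _
    have hT0 : 0 ≤ T := Finset.sum_nonneg fun i _ => by positivity
    have hAJ0 : 0 ≤ AJ := Finset.sum_nonneg fun i _ => by positivity
    have hcostov : ∑ i, c i * (fun _ => (1:ℝ)) i = S := by
      simp only [mul_one]
      rw [hSdef]
      exact Finset.sum_congr rfl fun i _ => hc i
    have hcostb : AJ ≤ ∑ i, c i * b i := by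
      calc AJ = ∑ i ∈ J, c i * b i := by
            rw [hAJ]
            exact Finset.sum_congr rfl fun i hi => by rw [hc, hbJ i hi, mul_one]
        _ ≤ ∑ i, c i * b i :=
            Finset.sum_le_sum_of_subset_of_nonneg (Finset.subset_univ J)
              (fun i _ _ => by rw [hc]; exact mul_nonneg (Nat.cast_nonneg _) (hbmem i).1)
    have hpt : ∀ x : Fin n → Bool,
        (if (∀ i, x i = true → i ∈ J) then AJ else S)
          ≤ rmin c {b, (fun _ => (1:ℝ))} x := by
      intro x
      apply le_csInf
      · exact ⟨∑ i, c i * (fun _ => (1:ℝ)) i,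
          ⟨(fun _ => 1), ⟨by simp, toRealVec_le_one x⟩, rfl⟩⟩
      · rintro y ⟨b', ⟨hb'B, hb'le⟩, rfl⟩
        rcases Finset.mem_insert.mp hb'B with h | h
        · subst h
          have hcond : ∀ i, x i = true → i ∈ J := by
            intro i hi
            rw [hJ, Finset.mem_filter]
            exact ⟨Finset.mem_univ i,
              (toRealVec_le_iff (fun j => (hbmem j).1)).mp hb'le i hi⟩
          rw [if_pos hcond]
          exact hcostb
        · rw [Finset.mem_singleton] at h; subst h
          refine le_trans ?_ (le_of_eq hcostov.symm)
          split
          · linarith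
          · exact le_refl S
    have hsum2 : ∑ x : Fin n → Bool,
        bweight p x * (if (∀ i, x i = true → i ∈ J) then AJ else S)
        = S - T * ∏ i ∈ Jᶜ, (1 - p i) := by
      have h1 : ∀ x : Fin n → Bool,
          bweight p x * (if (∀ i, x i = true → i ∈ J) then AJ else S)
          = S * bweight p x
            - T * (if (∀ i, x i = true → i ∈ J) then bweight p x else 0) := by
        intro x
        by_cases hcond : ∀ i, x i = true → i ∈ J
        · rw [if_pos hcond, if_pos hcond]
          have : AJ = S - T := by linarith
          rw [this]; ring
        · rw [if_neg hcond, if_neg hcond]; ring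
      rw [Finset.sum_congr rfl (fun x _ => h1 x), Finset.sum_sub_distrib,
        ← Finset.mul_sum, ← Finset.mul_sum, sum_bweight, sum_bweight_event p J, mul_one]
    have hkey : S - γ ≤ T * ∏ i ∈ Jᶜ, (1 - p i) := by
      have h2 : S - T * ∏ i ∈ Jᶜ, (1 - p i) ≤ rexp p c {b, (fun _ => (1:ℝ))} := by
        rw [rexp, ← hsum2]
        exact Finset.sum_le_sum fun x _ => mul_le_mul_of_nonneg_left (hpt x) (hw0 x)
      linarith
    have hp1 : ∀ i, 0 ≤ 1 - p i := fun i => by have := (hp i).2; linarith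
    have hQub : (∏ i ∈ Jᶜ, (1 - p i)) ≤ (1+β)^n * Real.exp (-(α * T)) := by
      have step1 : ∏ i ∈ Jᶜ, (1 - p i)
          ≤ ∏ i ∈ Jᶜ, ((1+β) * Real.exp (-(α * (a i:ℝ)))) :=
        Finset.prod_le_prod (fun i _ => hp1 i) (fun i _ => (hpb i).2)
      have step2 : ∏ i ∈ Jᶜ, ((1+β) * Real.exp (-(α * (a i:ℝ))))
          = (1+β)^(Jᶜ.card) * Real.exp (-(α * T)) := by
        rw [Finset.prod_mul_distrib, Finset.prod_const, ← Real.exp_sum]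
        congr 1
        rw [hT, Finset.mul_sum, ← Finset.sum_neg_distrib]
      have step3 : (1+β)^(Jᶜ.card) ≤ (1+β)^n := by
        apply pow_le_pow_right₀ (by linarith)
        calc Jᶜ.card ≤ Finset.univ.card := Finset.card_le_univ _
          _ = n := by rw [Finset.card_univ, Fintype.card_fin]
      calc ∏ i ∈ Jᶜ, (1 - p i) ≤ (1+β)^(Jᶜ.card) * Real.exp (-(α * T)) :=
            step1.trans_eq step2
        _ ≤ (1+β)^n * Real.exp (-(α * T)) :=
            mul_le_mul_of_nonneg_right step3 (Real.exp_pos _).le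
    refine ⟨Jᶜ, ?_⟩
    by_contra hne
    obtain ⟨k, hk⟩ := heven
    set m : ℕ := ∑ i ∈ Jᶜ, a i with hm
    have hTnat : T = (m : ℝ) := by rw [hT, hm]; push_cast; ring
    have hmk : m ≠ k := fun h => hne (by omega)
    have hgap : 1 ≤ |T - (k:ℝ)| := by
      rw [hTnat]
      rcases hmk.lt_or_gt with h | h
      · have h' : (m:ℝ) + 1 ≤ (k:ℝ) := by exact_mod_cast Nat.succ_le_of_lt h
        rw [abs_sub_comm, abs_of_nonneg (by linarith)]
        linarith
      · have h' : (k:ℝ) + 1 ≤ (m:ℝ) := by exact_mod_cast Nat.succ_le_of_lt h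
        rw [abs_of_nonneg (by linarith)]
        linarith
    have hSk : S = 2*(k:ℝ) := by rw [hSnat, hk]; push_cast; ring
    have hαk : α * (k:ℝ) = 1 := by rw [hSk] at hαS; linarith
    have hTS : T ≤ S := by linarith
    have hu0 : 0 ≤ α * T := mul_nonneg hα0.le hT0
    have hu2 : α * T ≤ 2 := by nlinarith
    have hud : α ≤ |α * T - 1| := by
      have heqd : α * T - 1 = α * (T - (k:ℝ)) := by rw [mul_sub, hαk]
      rw [heqd, abs_mul, abs_of_pos hα0]
      calc α = α * 1 := (mul_one α).symm
        _ ≤ α * |T - (k:ℝ)| := mul_le_mul_of_nonneg_left hgap hα0.le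
    have hana := ana_A hu0 hu2 hα0 hα1 hud
    have hanB := ana_B (n := n) hα0 hα1 hβ
    have hTexp : T * Real.exp (-(α * T))
        = (α * T) * Real.exp (1 - α * T) * Real.exp (-1) / α := by
      have hme : Real.exp (1 - α * T) * Real.exp (-1) = Real.exp (-(α * T)) := by
        rw [← Real.exp_add]; ring_nf
      rw [eq_div_iff hα0.ne',
        mul_assoc (α * T) (Real.exp (1 - α * T)) (Real.exp (-1)), hme]; ring
    have hchain : S - γ ≤ (1+β)^n * ((α*T) * Real.exp (1 - α*T)) * Real.exp (-1) / α := by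
      calc S - γ ≤ T * ∏ i ∈ Jᶜ, (1 - p i) := hkey
        _ ≤ T * ((1+β)^n * Real.exp (-(α * T))) := by
            apply mul_le_mul_of_nonneg_left hQub hT0
        _ = (1+β)^n * (T * Real.exp (-(α * T))) := by ring
        _ = (1+β)^n * ((α * T) * Real.exp (1 - α*T) * Real.exp (-1) / α) := by
            rw [hTexp]
        _ = (1+β)^n * ((α*T) * Real.exp (1 - α*T)) * Real.exp (-1) / α := by ring
    have hlast : (1+β)^n * ((α*T) * Real.exp (1 - α*T)) * Real.exp (-1) / α
        < (1-β)^(n+2) / (α * Real.exp 1) := by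
      have hpow0 : (0:ℝ) < (1+β)^n := by positivity
      have h6 : (1+β)^n * ((α*T) * Real.exp (1 - α*T)) ≤ (1+β)^n * (1 - α^2/9) :=
        mul_le_mul_of_nonneg_left hana hpow0.le
      have h7 : (1+β)^n * ((α*T) * Real.exp (1 - α*T)) < (1-β)^(n+2) :=
        lt_of_le_of_lt h6 hanB
      have h8 : (1-β)^(n+2) / (α * Real.exp 1)
          = (1-β)^(n+2) * Real.exp (-1) / α := by
        rw [Real.exp_neg, eq_div_iff hα0.ne', div_mul_eq_mul_div,
          div_eq_iff (by positivity : (α * Real.exp 1) ≠ 0)]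
        rw [mul_comm α (Real.exp 1), ← mul_assoc, mul_assoc _ (Real.exp 1)⁻¹ (Real.exp 1),
          inv_mul_cancel₀ (Real.exp_pos 1).ne']
        ring
      rw [h8, div_lt_div_iff₀ hα0 hα0]
      exact mul_lt_mul_of_pos_right (mul_lt_mul_of_pos_right h7 (Real.exp_pos _)) hα0
    linarith [hγ₁, hchain.trans_lt hlast]
end

section
/- Let n be a positive integer, let α ∈ (0,1], and let β := α²/(48(n+1)). Then (1+β)^n · (1 − 0.25·α²·e^{−1}) < (1−β)^{n+2}. -/
theorem stmt8 (n : ℕ) (hn : 0 < n) (α : ℝ) (hα : α ∈ Set.Ioc (0:ℝ) 1)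
    (β : ℝ) (hβ : β = α^2 / (48 * (n+1))) :
    (1+β)^n * (1 - 0.25 * α^2 * Real.exp (-1)) < (1-β)^(n+2) := by
  obtain ⟨hα0, hα1⟩ := hα
  have hn1 : (1:ℝ) ≤ (n:ℝ) := by exact_mod_cast hn
  have hα2 : 0 < α^2 := by positivity
  have hα2le : α^2 ≤ 1 := by nlinarith
  have hβpos : 0 < β := by rw [hβ]; positivity
  have hβle : β ≤ 1/96 := by
    rw [hβ, div_le_iff₀ (by positivity)]
    nlinarith
  have h1β : 0 < 1 - β := by linarith
  have hkey : 1 ≤ (1+2*β)*(1-β) := by nlinarith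
  have h2β : (0:ℝ) < 1 + 2*β := by linarith
  have hA : (1+β)^n ≤ ((1+2*β)^2*(1-β))^n := by
    apply pow_le_pow_left₀ (by linarith)
    nlinarith
  have hB : (1+β)^n ≤ (1+2*β)^(2*n+2) * (1-β)^(n+2) := by
    calc (1+β)^n ≤ ((1+2*β)^2*(1-β))^n := hA
    _ = (1+2*β)^(2*n)*(1-β)^n := by rw [mul_pow, ← pow_mul]
    _ ≤ (1+2*β)^(2*n) * (1-β)^n * ((1+2*β)*(1-β))^2 := by
        apply le_mul_of_one_le_right (by positivity)
        nlinarith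
    _ = (1+2*β)^(2*n+2) * (1-β)^(n+2) := by ring
  have hβn : β * (n+1) = α^2 / 48 := by
    rw [hβ]; field_simp
  have hC : (1+2*β)^(2*n+2) ≤ Real.exp (α^2/12) := by
    calc (1+2*β)^(2*n+2) ≤ (Real.exp (2*β))^(2*n+2) := by
          apply pow_le_pow_left₀ (le_of_lt h2β)
          linarith [Real.add_one_le_exp (2*β)]
    _ = Real.exp ((2*n+2) * (2*β)) := by
          rw [← Real.exp_nat_mul]; push_cast; ring_nf
    _ = Real.exp (α^2/12) := by
          congr 1
          push_cast
          nlinarith [hβn]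
  have hexp3 : Real.exp 1 < 3 := by
    linarith [Real.exp_one_lt_d9]
  have hexppos : (0:ℝ) < Real.exp 1 := Real.exp_pos 1
  have hinv : (1:ℝ)/3 < Real.exp (-1) := by
    rw [Real.exp_neg, show (1:ℝ)/3 = 3⁻¹ by norm_num]
    exact inv_strictAnti₀ hexppos hexp3
  have hc : 1 - 0.25 * α^2 * Real.exp (-1) < Real.exp (-(α^2/12)) := by
    have h1 : 1 - α^2/12 ≤ Real.exp (-(α^2/12)) := by
      linarith [Real.add_one_le_exp (-(α^2/12))]
    nlinarith
  have hpowpos : (0:ℝ) < (1+β)^n := by positivity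
  calc (1+β)^n * (1 - 0.25 * α^2 * Real.exp (-1))
      < (1+β)^n * Real.exp (-(α^2/12)) := by
        exact mul_lt_mul_of_pos_left hc hpowpos
    _ ≤ ((1+2*β)^(2*n+2) * (1-β)^(n+2)) * Real.exp (-(α^2/12)) := by
        exact mul_le_mul_of_nonneg_right hB (Real.exp_nonneg _)
    _ ≤ (Real.exp (α^2/12) * (1-β)^(n+2)) * Real.exp (-(α^2/12)) := by
        apply mul_le_mul_of_nonneg_right _ (Real.exp_nonneg _)
        exact mul_le_mul_of_nonneg_right hC (by positivity)
    _ = (1-β)^(n+2) := by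
        rw [mul_comm (Real.exp _), mul_assoc, ← Real.exp_add]
        simp
end

section
/- Let t and a_1, …, a_m be positive integers with Σ_{i=1}^m a_i divisible by t, let S := Σ_{i=1}^m a_i, let M := 13·S², and let n := m+1. Define p ∈ [0,1]^n by p_i := a_i/M⁴ for i ∈ [m] and p_{m+1} := 1/M⁶, define c ∈ ℝ^n by c_i := a_i for i ∈ [m] and c_{m+1} := 2M, and let γ := S²/(t·M⁴) + 6/M⁵. Suppose (I_j)_{j=1}^t is a partition of [m] with Σ_{i∈I_j} a_i = S/t for all j ∈ [t]. For j ∈ [t] define b^j ∈ {0,1}^{m+1} by b^j_i = 1 ⟺ i ∈ I_j (so b^j_{m+1} = 0), and let B := {𝟎, 𝟙} ∪ { b^j : j ∈ [t] }. Then B is a Pareto cover of μ_p with E_{μ_p}[c_B] ≤ γ. -/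
namespace Bernoulli

variable {n : ℕ}

theorem sum_bweight_mul_prod_toNat (p : Fin n → ℝ) (T : Finset (Fin n)) :
    ∑ x, bweight p x * ∏ i ∈ T, ((x i).toNat : ℝ) = ∏ i ∈ T, p i := by
  let f : Fin n → Bool → ℝ := fun i β => if β then p i else if i ∈ T then 0 else 1 - p i
  have hf : ∀ x, bweight p x * ∏ i ∈ T, ((x i).toNat : ℝ) = ∏ i, f i (x i) := by
    intro x
    rw [bweight, ← Fintype.prod_ite_mem T, ← Finset.prod_mul_distrib]
    refine Finset.prod_congr rfl fun i _ => ?_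
    by_cases hi : i ∈ T <;> cases x i <;> simp [f, hi]
  rw [Finset.sum_congr rfl fun x _ => hf x, ← Fintype.prod_sum, ← Fintype.prod_ite_mem T]
  refine Finset.prod_congr rfl fun i _ => ?_
  by_cases hi : i ∈ T <;> simp [f, hi]

theorem sum_bweight (p : Fin n → ℝ) : ∑ x, bweight p x = 1 := by
  simpa using sum_bweight_mul_prod_toNat p ∅

theorem sum_bweight_mul_toNat (p : Fin n → ℝ) (i : Fin n) :
    ∑ x, bweight p x * ((x i).toNat : ℝ) = p i := by
  simpa using sum_bweight_mul_prod_toNat p {i}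

theorem sum_bweight_mul_toNat_mul_toNat (p : Fin n → ℝ) {i j : Fin n} (hij : i ≠ j) :
    ∑ x, bweight p x * (((x i).toNat : ℝ) * (x j).toNat) = p i * p j := by
  classical
  simpa [Finset.prod_pair hij] using sum_bweight_mul_prod_toNat p {i, j}

theorem bweight_nonneg {p : Fin n → ℝ} (hp₀ : 0 ≤ p) (hp₁ : p ≤ 1) (x : Fin n → Bool) :
    0 ≤ bweight p x :=
  Finset.prod_nonneg fun i _ => by
    split
    · exact hp₀ i
    · exact sub_nonneg.2 (hp₁ i)

end Bernoulli

section Cover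

variable {n : ℕ} {c : Fin n → ℝ} {B : Finset (Fin n → Bool)}

theorem bmin_le_bcost {x b : Fin n → Bool} (hb : b ∈ B) (hxb : x ≤ b) :
    bmin c B x ≤ bcost c b :=
  csInf_le ((B.finite_toSet.image (bcost c)).bddBelow.mono (Set.image_mono fun _ hy => hy.1))
    ⟨b, ⟨hb, hxb⟩, rfl⟩

theorem bcover_of_top_mem (p : Fin n → ℝ) (h : (fun _ => true) ∈ B) : bcover p B := by
  unfold bcover
  rw [Finset.sum_congr rfl fun x _ => if_pos ⟨_, h, fun i => Bool.le_true (x i)⟩]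
  exact Bernoulli.sum_bweight p

theorem bexp_le_of_bmin_le {p : Fin n → ℝ} (hp₀ : 0 ≤ p) (hp₁ : p ≤ 1) {g : (Fin n → Bool) → ℝ}
    (hg : ∀ x, bmin c B x ≤ g x) : bexp p c B ≤ ∑ x, bweight p x * g x :=
  Finset.sum_le_sum fun x _ =>
    mul_le_mul_of_nonneg_left (hg x) (Bernoulli.bweight_nonneg hp₀ hp₁ x)

end Cover

theorem bcost_top {n : ℕ} (c : Fin n → ℝ) : bcost c (fun _ => true) = ∑ i, c i := by
  simp [bcost]

theorem bcost_eq_sum_castSucc {m : ℕ} (c : Fin (m + 1) → ℝ) {v : Fin (m + 1) → Bool}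
    {I : Finset (Fin m)} (hv : ∀ i, v i.castSucc = true ↔ i ∈ I) (hlast : v (Fin.last m) = false) :
    bcost c v = ∑ i ∈ I, c i.castSucc := by
  simp [bcost, Fin.sum_univ_castSucc, hlast, hv, Finset.sum_ite_mem]

theorem le_of_castSucc_imp {m : ℕ} {x y : Fin (m + 1) → Bool} (hlast : x (Fin.last m) = false)
    (h : ∀ i : Fin m, x i.castSucc = true → y i.castSucc = true) : x ≤ y := fun k => by
  induction k using Fin.lastCases with
  | last => simp [hlast]
  | cast i => exact Bool.le_iff_imp.2 (h i)

def coverBound {m : ℕ} (L K : ℝ) (x : Fin (m + 1) → Bool) : ℝ :=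
  L * ∑ i : Fin m, ((x i.castSucc).toNat : ℝ) + K * ((x (Fin.last m)).toNat +
    ∑ q ∈ (Finset.univ : Finset (Fin m)).offDiag, ((x q.1.castSucc).toNat : ℝ) * (x q.2.castSucc).toNat)

theorem bmin_le_coverBound {m t : ℕ} {c : Fin (m + 1) → ℝ} {B : Finset (Fin (m + 1) → Bool)}
    {I : Fin t → Finset (Fin m)} {b : Fin t → Fin (m + 1) → Bool} {L K : ℝ}
    (hL : 0 ≤ L) (hK : 0 ≤ K) (hpart : ∀ i, ∃ j, i ∈ I j)
    (hbI : ∀ j, ∀ i ∈ I j, b j i.castSucc = true) (hbB : ∀ j, b j ∈ B)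
    (hbL : ∀ j, bcost c (b j) ≤ L) (hbot : (fun _ => false) ∈ B) (htop : (fun _ => true) ∈ B)
    (htopK : bcost c (fun _ => true) ≤ K) (x : Fin (m + 1) → Bool) :
    bmin c B x ≤ coverBound L K x := by
  rw [coverBound]
  set N₁ := ∑ i : Fin m, ((x i.castSucc).toNat : ℝ)
  set N₂ := ∑ q ∈ (Finset.univ : Finset (Fin m)).offDiag,
    ((x q.1.castSucc).toNat : ℝ) * (x q.2.castSucc).toNat
  have hN₁ : 0 ≤ N₁ := by positivity
  have hN₂ : 0 ≤ N₂ := by positivity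
  have hle_top : bmin c B x ≤ K := (bmin_le_bcost htop fun i => Bool.le_true _).trans htopK
  by_cases hlast : x (Fin.last m) = true
  · simp only [hlast, Bool.toNat_true, Nat.cast_one]
    nlinarith
  simp only [Bool.not_eq_true] at hlast
  simp only [hlast, Bool.toNat_false, Nat.cast_zero, zero_add]
  by_cases hx : ∀ i : Fin m, x i.castSucc = false
  · have := bmin_le_bcost (c := c) hbot (le_of_castSucc_imp hlast fun i hi => by simp [hx i] at hi)
    simp only [bcost, Bool.false_eq_true, if_false, Finset.sum_const_zero] at this
    nlinarith
  push Not at hx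
  obtain ⟨i, hi⟩ := hx
  simp only [ne_eq, Bool.not_eq_false] at hi
  obtain ⟨j, hij⟩ := hpart i
  by_cases hsub : ∀ i' : Fin m, x i'.castSucc = true → i' ∈ I j
  · have hxb : x ≤ b j := le_of_castSucc_imp hlast fun i' h => hbI j i' (hsub i' h)
    have h1 : 1 ≤ N₁ := by
      simpa [hi] using Finset.single_le_sum (f := fun i : Fin m => ((x i.castSucc).toNat : ℝ))
        (fun _ _ => by positivity) (Finset.mem_univ i)
    nlinarith [(bmin_le_bcost (c := c) (hbB j) hxb).trans (hbL j)]
  · push Not at hsub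
    obtain ⟨i', hi', hi'j⟩ := hsub
    have hne : i ≠ i' := fun h => hi'j (h ▸ hij)
    have h2 : 1 ≤ N₂ := by
      simpa [hi, hi'] using Finset.single_le_sum
        (f := fun q : Fin m × Fin m => ((x q.1.castSucc).toNat : ℝ) * (x q.2.castSucc).toNat)
        (fun _ _ => by positivity)
        ((Finset.mem_offDiag (x := (i, i'))).2 ⟨Finset.mem_univ _, Finset.mem_univ _, hne⟩)
    nlinarith

theorem sum_bweight_mul_coverBound {m : ℕ} (p : Fin (m + 1) → ℝ) (L K : ℝ) :
    ∑ x, bweight p x * coverBound L K x = L * ∑ i : Fin m, p i.castSucc +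
      K * (p (Fin.last m) + ∑ q ∈ (Finset.univ : Finset (Fin m)).offDiag,
        p q.1.castSucc * p q.2.castSucc) := by
  have hpair : ∀ q ∈ (Finset.univ : Finset (Fin m)).offDiag,
      ∑ x, bweight p x * (((x q.1.castSucc).toNat : ℝ) * (x q.2.castSucc).toNat) =
        p q.1.castSucc * p q.2.castSucc := fun q hq =>
    Bernoulli.sum_bweight_mul_toNat_mul_toNat p
      (Fin.castSucc_injective m |>.ne (Finset.mem_offDiag.1 hq).2.2)
  simp only [coverBound, mul_add, Finset.mul_sum, Finset.sum_add_distrib, mul_left_comm _ L,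
    mul_left_comm _ K]
  rw [Finset.sum_comm, Finset.sum_comm (t := (Finset.univ : Finset (Fin m)).offDiag)]
  simp only [← Finset.mul_sum, Bernoulli.sum_bweight_mul_toNat]
  rw [Finset.sum_congr rfl hpair]

theorem sum_offDiag_mul_le_sq_sum {ι R : Type*} [DecidableEq ι] [CommSemiring R] [PartialOrder R]
    [IsOrderedRing R] (s : Finset ι) {f : ι → R}
    (hf : ∀ i ∈ s, 0 ≤ f i) : ∑ q ∈ s.offDiag, f q.1 * f q.2 ≤ (∑ i ∈ s, f i) ^ 2 := by
  rw [sq, Finset.sum_mul_sum, ← Finset.sum_product', ← Finset.diag_union_offDiag]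
  refine Finset.sum_le_sum_of_subset_of_nonneg Finset.subset_union_right fun q hq _ => ?_
  obtain ⟨hq₁, hq₂⟩ := Finset.mem_product.1 (Finset.diag_union_offDiag s ▸ hq)
  exact mul_nonneg (hf _ hq₁) (hf _ hq₂)

theorem add_two_mul_mul_le {s M : ℝ} (hs : 0 ≤ s) (hsM : s ≤ M) :
    (s + 2 * M) * (1 / M ^ 6 + (s / M ^ 4) ^ 2) ≤ 6 / M ^ 5 := by
  obtain hM | hM := (hs.trans hsM).eq_or_lt
  · obtain rfl : s = 0 := le_antisymm (hM ▸ hsM) hs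
    simp [← hM]
  have key : (s + 2 * M) * (M ^ 2 + s ^ 2) ≤ 6 * M ^ 3 := by nlinarith [mul_le_mul hsM hsM hs hM.le]
  calc (s + 2 * M) * (1 / M ^ 6 + (s / M ^ 4) ^ 2) = (s + 2 * M) * (M ^ 2 + s ^ 2) / M ^ 8 := by
        field_simp
    _ ≤ 6 * M ^ 3 / M ^ 8 := by gcongr
    _ = 6 / M ^ 5 := by field_simp

open Classical in
theorem stmt12_general {m : ℕ} (t : ℕ) (a : Fin m → ℕ)
    (S M : ℕ) (hS : S = ∑ i, a i) (hM : M = 13 * S^2)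
    (p c : Fin (m+1) → ℝ)
    (hp1 : ∀ i : Fin m, p i.castSucc = (a i : ℝ) / (M : ℝ)^4)
    (hp2 : p (Fin.last m) = 1 / (M : ℝ)^6)
    (hc1 : ∀ i : Fin m, c i.castSucc = (a i : ℝ))
    (hc2 : c (Fin.last m) = 2 * (M : ℝ))
    (γ : ℝ) (hγ : γ = (S : ℝ)^2 / ((t : ℝ) * (M : ℝ)^4) + 6 / (M : ℝ)^5)
    (I : Fin t → Finset (Fin m))
    (hpart : ∀ i : Fin m, ∃! j, i ∈ I j)
    (hsum : ∀ j, t * ∑ i ∈ I j, a i = S)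
    (b : Fin t → Fin (m+1) → Bool)
    (hb1 : ∀ j (i : Fin m), b j i.castSucc = true ↔ i ∈ I j)
    (hb2 : ∀ j, b j (Fin.last m) = false)
    (B : Finset (Fin (m+1) → Bool))
    (hB : B = insert (fun _ => false) (insert (fun _ => true) (Finset.univ.image b))) :
    bcover p B ∧ bexp p c B ≤ γ := by
  have hSM : S ≤ M := hM ▸ by nlinarith [Nat.le_self_pow two_ne_zero S]
  have ha_le : ∀ i, (a i : ℝ) ≤ M ^ 4 := fun i => by
    exact_mod_cast (hS ▸ Finset.single_le_sum (fun j _ => (a j).zero_le) (Finset.mem_univ i)).trans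
      (hSM.trans (Nat.le_self_pow four_ne_zero M))
  have hp : 0 ≤ p ∧ p ≤ 1 := by
    refine ⟨fun i => ?_, fun i => ?_⟩ <;> induction i using Fin.lastCases
    · rw [hp2]; positivity
    · rw [hp1]; positivity
    · rw [hp2, one_div, ← Nat.cast_pow]; exact Nat.cast_inv_le_one _
    · exact (hp1 _).trans_le (div_le_one_of_le₀ (ha_le _) (by positivity))
  have hsum_p : ∑ i : Fin m, p i.castSucc = S / M ^ 4 := by simp [hp1, ← Finset.sum_div, hS]
  have hcost_b : ∀ j, bcost c (b j) = S / t := fun j => by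
    rw [bcost_eq_sum_castSucc c (hb1 j) (hb2 j), eq_div_iff (Nat.cast_ne_zero.2 j.pos.ne'),
      mul_comm]
    simp only [hc1]
    exact_mod_cast hsum j
  have hcost_top : bcost c (fun _ => true) = S + 2 * M := by
    simp [bcost_top, Fin.sum_univ_castSucc, hc1, hc2, hS]
  refine ⟨bcover_of_top_mem p (by simp [hB]), ?_⟩
  calc bexp p c B ≤ ∑ x, bweight p x * coverBound ((S : ℝ) / t) (S + 2 * M) x :=
        bexp_le_of_bmin_le hp.1 hp.2 (bmin_le_coverBound (by positivity) (by positivity)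
          (fun i => (hpart i).exists) (fun j i => (hb1 j i).2) (fun j => by simp [hB])
          (fun j => (hcost_b j).le) (by simp [hB]) (by simp [hB]) hcost_top.le)
    _ ≤ S / t * (S / M ^ 4) + (S + 2 * M) * (1 / M ^ 6 + (S / M ^ 4) ^ 2) := by
        rw [sum_bweight_mul_coverBound, hsum_p, hp2, ← hsum_p]
        gcongr
        exact sum_offDiag_mul_le_sq_sum (Finset.univ : Finset (Fin m)) fun i _ => hp.1 i.castSucc
    _ ≤ γ := by
        rw [hγ, div_mul_div_comm, ← sq]
        gcongr
        exact add_two_mul_mul_le (Nat.cast_nonneg S) (Nat.cast_le.2 hSM)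

open Classical in
theorem stmt12 {m : ℕ} (t : ℕ) (ht : 0 < t) (a : Fin m → ℕ) (ha : ∀ i, 0 < a i)
    (S M : ℕ) (hS : S = ∑ i, a i) (hdvd : t ∣ S) (hM : M = 13 * S^2)
    (p c : Fin (m+1) → ℝ)
    (hp1 : ∀ i : Fin m, p i.castSucc = (a i : ℝ) / (M : ℝ)^4)
    (hp2 : p (Fin.last m) = 1 / (M : ℝ)^6)
    (hc1 : ∀ i : Fin m, c i.castSucc = (a i : ℝ))
    (hc2 : c (Fin.last m) = 2 * (M : ℝ))
    (γ : ℝ) (hγ : γ = (S : ℝ)^2 / ((t : ℝ) * (M : ℝ)^4) + 6 / (M : ℝ)^5)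
    (I : Fin t → Finset (Fin m))
    (hpart : ∀ i : Fin m, ∃! j, i ∈ I j)
    (hsum : ∀ j, t * ∑ i ∈ I j, a i = S)
    (b : Fin t → Fin (m+1) → Bool)
    (hb1 : ∀ j (i : Fin m), b j i.castSucc = true ↔ i ∈ I j)
    (hb2 : ∀ j, b j (Fin.last m) = false)
    (B : Finset (Fin (m+1) → Bool))
    (hB : B = insert (fun _ => false) (insert (fun _ => true) (Finset.univ.image b))) :
    bcover p B ∧ bexp p c B ≤ γ :=
  stmt12_general t a S M hS hM p c hp1 hp2 hc1 hc2 γ hγ I hpart hsum b hb1 hb2 B hB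
end

section
/- Let μ_1, …, μ_n be probability measures on [0,1] with E_{X_i ∼ μ_i}[X_i] ≥ α for all i, where α ∈ (0,1), let μ := ∏_{i=1}^n μ_i, let c ∈ ℝ^n with c ≥ 0, and let ε ∈ (0,1). Let Q(ε) = {q_0, …, q_{M+1}} be the query coordinates: q_0 = 0, q_l = ε·α·(1+ε)^{l−1} for l ∈ [M], q_{M+1} = 1, with M = ⌈log_{1+ε}((ε·α)^{−1})⌉. For a Pareto cover B = {b^1, …, b^k} of μ, define the rounded set B̂ = {b̂^1, …, b̂^k} by b̂^j_i := min{ q ∈ Q(ε) : q ≥ b^j_i } for all i, j. Then B̂ is a Pareto cover of μ with all coordinates in Q(ε), and E_μ[c_{B̂}] ≤ (1 + 2ε) · E_μ[c_B]. -/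
/-!
Rounding a coordinate `t ∈ [0, 1]` up to the grid `Q(ε) = {0, 1} ∪ {εα(1+ε)^m : m < M}` gives
`t ≤ t̂ ≤ (1+ε)t + εα`: below `εα` the first grid point suffices, above it consecutive grid points
differ by a factor `1+ε`, and `εα(1+ε)^M ≥ 1` by the choice of `M`. Since `c ≥ 0`, every cost
`cᵀb̂` is at most `(1+ε)cᵀb + εα∑cᵢ`, so pointwise on the cover `c_B̂ ≤ (1+ε)c_B + εα∑cᵢ`.
The additive term is absorbed because `c_B(x) ≥ cᵀx` on the cover, whence
`E[c_B] ≥ ∑ cᵢ E[Xᵢ] ≥ α∑cᵢ`.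
-/

open MeasureTheory

/-- `c_B(x) = min { cᵀb^j : j ∈ [k], x ≤ b^j }` for `B = {b^1, …, b^k}`
(with the convention `sInf ∅ = 0`; for a Pareto cover the uncovered points
have measure zero). -/
noncomputable def paretoMin {n k : ℕ} (c : Fin n → ℝ) (b : Fin k → Fin n → ℝ)
    (x : Fin n → ℝ) : ℝ :=
  sInf ((fun j => ∑ i, c i * b j i) '' {j | x ≤ b j})

section ParetoMin

variable {n k : ℕ} (c : Fin n → ℝ) (b : Fin k → Fin n → ℝ)

lemma paretoMin_le {x : Fin n → ℝ} {j : Fin k} (hj : x ≤ b j) :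
    paretoMin c b x ≤ ∑ i, c i * b j i :=
  csInf_le (Set.toFinite _).bddBelow ⟨j, hj, rfl⟩

lemma exists_paretoMin_eq {x : Fin n → ℝ} (hx : ∃ j, x ≤ b j) :
    ∃ j, x ≤ b j ∧ paretoMin c b x = ∑ i, c i * b j i := by
  obtain ⟨j, hj, h⟩ := (Set.Nonempty.image (fun j => ∑ i, c i * b j i) (s := {j | x ≤ b j})
    hx).csInf_mem (Set.toFinite _)
  exact ⟨j, hj, h.symm⟩

lemma abs_paretoMin_le (x : Fin n → ℝ) :
    |paretoMin c b x| ≤ ∑ j, |∑ i, c i * b j i| := by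
  by_cases hx : ∃ j, x ≤ b j
  · obtain ⟨j, -, h⟩ := exists_paretoMin_eq c b hx
    rw [h]
    exact Finset.single_le_sum (f := fun j => |∑ i, c i * b j i|) (fun j _ => abs_nonneg _)
      (Finset.mem_univ j)
  · have hempty : {j | x ≤ b j} = ∅ := Set.eq_empty_iff_forall_notMem.2 fun j hj => hx ⟨j, hj⟩
    simp only [paretoMin, hempty, Set.image_empty, Real.sInf_empty, abs_zero]
    exact Finset.sum_nonneg fun j _ => abs_nonneg _

lemma measurable_paretoMin : Measurable (paretoMin c b) := by
  -- `paretoMin c b x` depends on `x` only through the finite datum `fun j => x ≤ b j`.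
  have : paretoMin c b =
      (fun S : Fin k → Prop => sInf ((fun j => ∑ i, c i * b j i) '' {j | S j})) ∘
        fun x j => x ≤ b j := rfl
  rw [this]
  exact (measurable_of_countable _).comp
    (measurable_pi_lambda _ fun j => measurableSet_setOfPred.mp measurableSet_Iic)

lemma integrable_paretoMin (ν : Measure (Fin n → ℝ)) [IsFiniteMeasure ν] :
    Integrable (paretoMin c b) ν :=
  .of_bound (measurable_paretoMin c b).aestronglyMeasurable _
    (ae_of_all _ fun x => (Real.norm_eq_abs _).trans_le (abs_paretoMin_le c b x))

lemma paretoMin_le_mul_add {b' : Fin k → Fin n → ℝ} {A d : ℝ} (hle : ∀ j, b j ≤ b' j)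
    (hcost : ∀ j, ∑ i, c i * b' j i ≤ A * ∑ i, c i * b j i + d)
    {x : Fin n → ℝ} (hx : ∃ j, x ≤ b j) :
    paretoMin c b' x ≤ A * paretoMin c b x + d := by
  obtain ⟨j, hj, h⟩ := exists_paretoMin_eq c b hx
  rw [h]
  exact (paretoMin_le c b' (hj.trans (hle j))).trans (hcost j)

lemma integral_paretoMin_le_mul_add {b' : Fin k → Fin n → ℝ} {A d : ℝ} (hle : ∀ j, b j ≤ b' j)
    (hcost : ∀ j, ∑ i, c i * b' j i ≤ A * ∑ i, c i * b j i + d)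
    {ν : Measure (Fin n → ℝ)} [IsProbabilityMeasure ν] (hcover : ∀ᵐ x ∂ν, ∃ j, x ≤ b j) :
    ∫ x, paretoMin c b' x ∂ν ≤ A * ∫ x, paretoMin c b x ∂ν + d :=
  calc ∫ x, paretoMin c b' x ∂ν ≤ ∫ x, (A * paretoMin c b x + d) ∂ν :=
        integral_mono_ae (integrable_paretoMin c b' ν)
          (((integrable_paretoMin c b ν).const_mul A).add (integrable_const d))
          (hcover.mono fun x hx => paretoMin_le_mul_add c b hle hcost hx)
    _ = A * ∫ x, paretoMin c b x ∂ν + d := by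
        rw [integral_add ((integrable_paretoMin c b ν).const_mul A) (integrable_const d),
          integral_const_mul, integral_const, probReal_univ, one_smul]

lemma sum_mul_le_paretoMin {c : Fin n → ℝ} (hc : ∀ i, 0 ≤ c i) {x : Fin n → ℝ}
    (hx : ∃ j, x ≤ b j) : ∑ i, c i * x i ≤ paretoMin c b x := by
  obtain ⟨j, hj, h⟩ := exists_paretoMin_eq c b hx
  rw [h]
  exact Finset.sum_le_sum fun i _ => mul_le_mul_of_nonneg_left (hj i) (hc i)

end ParetoMin

lemma sum_mul_le_mul_sum_add {n : ℕ} {c u v : Fin n → ℝ} {A a : ℝ} (hc : ∀ i, 0 ≤ c i)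
    (h : ∀ i, u i ≤ A * v i + a) :
    ∑ i, c i * u i ≤ A * ∑ i, c i * v i + a * ∑ i, c i :=
  calc ∑ i, c i * u i ≤ ∑ i, c i * (A * v i + a) :=
        Finset.sum_le_sum fun i _ => mul_le_mul_of_nonneg_left (h i) (hc i)
    _ = A * ∑ i, c i * v i + a * ∑ i, c i := by
        rw [Finset.mul_sum, Finset.mul_sum, ← Finset.sum_add_distrib]
        exact Finset.sum_congr rfl fun i _ => by ring

def queryGrid (a ε : ℝ) (M : ℕ) : Set ℝ :=
  {0, 1} ∪ {q | ∃ l : ℕ, 1 ≤ l ∧ l ≤ M ∧ q = a * (1 + ε) ^ (l - 1)}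

noncomputable def roundUp (Q : Set ℝ) (t : ℝ) : ℝ := sInf {q ∈ Q | t ≤ q}

section Rounding

variable {Q : Set ℝ} {a ε t : ℝ} {M : ℕ}

lemma roundUp_mem (hQ : Q.Finite) (h : ∃ q ∈ Q, t ≤ q) : roundUp Q t ∈ {q ∈ Q | t ≤ q} :=
  Set.Nonempty.csInf_mem h (hQ.subset (Set.sep_subset _ _))

lemma roundUp_le (hQ : Q.Finite) {q : ℝ} (hq : q ∈ Q) (htq : t ≤ q) : roundUp Q t ≤ q :=
  csInf_le (hQ.subset (Set.sep_subset _ _)).bddBelow ⟨hq, htq⟩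

lemma queryGrid_finite : (queryGrid a ε M).Finite :=
  (Set.toFinite _).union <| ((Set.finite_Icc 1 M).image fun l => a * (1 + ε) ^ (l - 1)).subset <| by
    rintro q ⟨l, h1, h2, rfl⟩
    exact ⟨l, ⟨h1, h2⟩, rfl⟩

lemma min_one_mem_queryGrid (ha : 0 ≤ a) (hε : 0 ≤ ε) (hM : 1 ≤ a * (1 + ε) ^ M) (m : ℕ) :
    min 1 (a * (1 + ε) ^ m) ∈ queryGrid a ε M := by
  rcases lt_or_ge m M with hm | hm
  · rcases min_choice 1 (a * (1 + ε) ^ m) with h | h <;> rw [h]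
    · exact Or.inl (by simp)
    · exact Or.inr ⟨m + 1, by omega, hm, by simp⟩
  · rw [min_eq_left (hM.trans (by gcongr; linarith))]
    exact Or.inl (by simp)

lemma exists_mul_pow_between (ha : 0 < a) (hε : 0 < ε) (ht : 0 ≤ t) :
    ∃ m : ℕ, t ≤ a * (1 + ε) ^ m ∧ a * (1 + ε) ^ m ≤ (1 + ε) * t + a := by
  rcases le_or_gt t a with hta | hta
  · exact ⟨0, by simpa using hta, by simp; positivity⟩
  · obtain ⟨m, hm, hm'⟩ :=
      exists_nat_pow_near ((one_le_div ha).2 hta.le) (by linarith : 1 < 1 + ε)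
    rw [le_div_iff₀ ha] at hm
    rw [div_lt_iff₀ ha] at hm'
    refine ⟨m + 1, by linarith, ?_⟩
    rw [pow_succ]
    nlinarith

lemma exists_mem_queryGrid_between (ha : 0 < a) (hε : 0 < ε) (hM : 1 ≤ a * (1 + ε) ^ M)
    (ht : t ∈ Set.Icc 0 1) : ∃ q ∈ queryGrid a ε M, t ≤ q ∧ q ≤ (1 + ε) * t + a := by
  obtain ⟨m, h1, h2⟩ := exists_mul_pow_between ha hε ht.1
  exact ⟨_, min_one_mem_queryGrid ha.le hε.le hM m, le_min ht.2 h1, (min_le_right _ _).trans h2⟩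

lemma roundUp_queryGrid (ha : 0 < a) (hε : 0 < ε) (hM : 1 ≤ a * (1 + ε) ^ M)
    (ht : t ∈ Set.Icc 0 1) :
    roundUp (queryGrid a ε M) t ∈ queryGrid a ε M ∧ t ≤ roundUp (queryGrid a ε M) t ∧
      roundUp (queryGrid a ε M) t ≤ (1 + ε) * t + a := by
  obtain ⟨q, hq, htq, hqt⟩ := exists_mem_queryGrid_between ha hε hM ht
  obtain ⟨hmem, hle⟩ := roundUp_mem queryGrid_finite ⟨q, hq, htq⟩
  exact ⟨hmem, hle, (roundUp_le queryGrid_finite hq htq).trans hqt⟩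

end Rounding

lemma one_le_mul_pow_ceil_logb {a r : ℝ} (ha : 0 < a) (hr : 1 < r) :
    1 ≤ a * r ^ ⌈Real.logb r a⁻¹⌉₊ := by
  have : a⁻¹ ≤ r ^ ⌈Real.logb r a⁻¹⌉₊ :=
    calc a⁻¹ = r ^ Real.logb r a⁻¹ := (Real.rpow_logb (by linarith) hr.ne' (inv_pos.2 ha)).symm
      _ ≤ r ^ (⌈Real.logb r a⁻¹⌉₊ : ℝ) := Real.rpow_le_rpow_of_exponent_le hr.le (Nat.le_ceil _)
      _ = r ^ ⌈Real.logb r a⁻¹⌉₊ := Real.rpow_natCast _ _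
  rwa [inv_le_iff_one_le_mul₀' ha] at this

lemma restrict_eq_self_of_measure_eq_one {Ω : Type*} [MeasurableSpace Ω] {ν : Measure Ω}
    [IsProbabilityMeasure ν] {s : Set Ω} (hs : MeasurableSet s) (h : ν s = 1) :
    ν.restrict s = ν :=
  Measure.restrict_eq_self_of_ae_mem ((mem_ae_iff_prob_eq_one hs).2 h)

lemma sum_mul_integral_le_integral_paretoMin {n k : ℕ} (μ : Fin n → Measure ℝ)
    [∀ i, IsProbabilityMeasure (μ i)] (hμ : ∀ i, μ i (Set.Icc 0 1) = 1)
    {c : Fin n → ℝ} (hc : ∀ i, 0 ≤ c i) {b : Fin k → Fin n → ℝ}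
    (hcover : ∀ᵐ x ∂Measure.pi μ, ∃ j, x ≤ b j) :
    ∑ i, c i * ∫ t, t ∂μ i ≤ ∫ x, paretoMin c b x ∂Measure.pi μ := by
  have hint : ∀ i, Integrable (fun x : Fin n → ℝ => x i) (Measure.pi μ) := fun i =>
    integrable_eval <| by
      rw [← restrict_eq_self_of_measure_eq_one measurableSet_Icc (hμ i)]
      exact continuous_id.integrableOn_Icc
  calc ∑ i, c i * ∫ t, t ∂μ i = ∫ x, ∑ i, c i * x i ∂Measure.pi μ := by
        rw [integral_finsetSum _ fun i _ => (hint i).const_mul (c i)]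
        refine Finset.sum_congr rfl fun i _ => ?_
        rw [integral_const_mul,
          integral_comp_eval (X := fun _ => ℝ) (f := fun t => t) aestronglyMeasurable_id]
    _ ≤ ∫ x, paretoMin c b x ∂Measure.pi μ :=
        integral_mono_ae (integrable_finsetSum _ fun i _ => (hint i).const_mul (c i))
          (integrable_paretoMin c b _) (hcover.mono fun x hx => sum_mul_le_paretoMin b hc hx)

theorem stmt16 {n k : ℕ} (μ : Fin n → Measure ℝ) [∀ i, IsProbabilityMeasure (μ i)]
    (hμ : ∀ i, μ i (Set.Icc 0 1) = 1)
    (α ε : ℝ) (hα : α ∈ Set.Ioo (0:ℝ) 1) (hε : ε ∈ Set.Ioo (0:ℝ) 1)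
    (hexp : ∀ i, α ≤ ∫ t in Set.Icc (0:ℝ) 1, t ∂(μ i))
    (c : Fin n → ℝ) (hc : ∀ i, 0 ≤ c i)
    (b : Fin k → Fin n → ℝ) (hb : ∀ j i, b j i ∈ Set.Icc (0:ℝ) 1)
    (hcover : Measure.pi μ {x | ∃ j, x ≤ b j} = 1)
    (M : ℕ) (hM : M = ⌈Real.logb (1+ε) (ε * α)⁻¹⌉₊)
    (Q : Set ℝ)
    (hQ : Q = {0, 1} ∪ {q | ∃ l : ℕ, 1 ≤ l ∧ l ≤ M ∧ q = ε * α * (1+ε)^(l-1)})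
    (bhat : Fin k → Fin n → ℝ)
    (hbhat : ∀ j i, bhat j i = sInf {q ∈ Q | b j i ≤ q}) :
    Measure.pi μ {x | ∃ j, x ≤ bhat j} = 1 ∧
    (∀ j i, bhat j i ∈ Q) ∧
    ∫ x, paretoMin c bhat x ∂(Measure.pi μ) ≤
      (1 + 2*ε) * ∫ x, paretoMin c b x ∂(Measure.pi μ) := by
  have hεα : 0 < ε * α := mul_pos hε.1 hα.1
  have hgrid : 1 ≤ ε * α * (1 + ε) ^ M := by
    rw [hM]
    exact one_le_mul_pow_ceil_logb hεα (by linarith [hε.1])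
  have hround : ∀ j i, bhat j i ∈ Q ∧ b j i ≤ bhat j i ∧ bhat j i ≤ (1 + ε) * b j i + ε * α := by
    intro j i
    rw [hbhat, hQ]
    exact roundUp_queryGrid hεα hε.1 hgrid (hb j i)
  have hae : ∀ᵐ x ∂Measure.pi μ, ∃ j, x ≤ b j :=
    (ae_iff_prob_eq_one (Measurable.exists fun j => measurableSet_setOfPred.mp measurableSet_Iic)).2
      hcover
  refine ⟨le_antisymm prob_le_one (hcover ▸ measure_mono fun x ⟨j, hj⟩ =>
    ⟨j, hj.trans fun i => (hround j i).2.1⟩), fun j i => (hround j i).1, ?_⟩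
  have hmean : ∀ i, α ≤ ∫ t, t ∂μ i := fun i => by
    simpa only [restrict_eq_self_of_measure_eq_one measurableSet_Icc (hμ i)] using hexp i
  have hlower : α * ∑ i, c i ≤ ∫ x, paretoMin c b x ∂Measure.pi μ := by
    rw [Finset.mul_sum]
    refine le_trans (Finset.sum_le_sum fun i _ => ?_)
      (sum_mul_integral_le_integral_paretoMin μ hμ hc hae)
    rw [mul_comm]
    exact mul_le_mul_of_nonneg_left (hmean i) (hc i)
  calc ∫ x, paretoMin c bhat x ∂Measure.pi μ
      ≤ (1 + ε) * ∫ x, paretoMin c b x ∂Measure.pi μ + ε * α * ∑ i, c i :=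
        integral_paretoMin_le_mul_add c b (fun j i => (hround j i).2.1)
          (fun j => sum_mul_le_mul_sum_add hc fun i => (hround j i).2.2) hae
    _ ≤ (1 + 2 * ε) * ∫ x, paretoMin c b x ∂Measure.pi μ := by
        linarith [mul_le_mul_of_nonneg_left hlower hε.1.le]
end
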